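/- arXiv:2602.24124 — 9 statements merged into one kernel-verified Lean document; each statement's English description precedes it below -/
import Mathlib

section
/- A crossing family F over a finite set V admits a cosigning if and only if every set U in F includes an element u such that V\{u} ∉ F and excludes an element v such that {v} ∉ F. -/
/-- A crossing family `F` over a finite set `V` admits a cosigning if and
only if every set `U ∈ F` includes an element `u` with `V \ {u} ∉ F` and excludes an element
`v` with `{v} ∉ F`. (`true` = `+`, `false` = `−`.) -/
theorem stmt_1 {V : Type*} [Fintype V] (F : Set (Set V))
    (hF : ∀ U ∈ F, U ≠ ∅ ∧ U ≠ Set.univ)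
    (hcross : ∀ U ∈ F, ∀ W ∈ F, (U ∩ W).Nonempty → U ∪ W ≠ Set.univ →
      U ∩ W ∈ F ∧ U ∪ W ∈ F) :
    (∃ σ : V → Bool, ∀ U ∈ F, (∃ u ∈ U, σ u = true) ∧ (∃ v ∉ U, σ v = false)) ↔
      (∀ U ∈ F, (∃ u ∈ U, ({u}ᶜ : Set V) ∉ F) ∧ (∃ v ∉ U, ({v} : Set V) ∉ F)) := by
  classical
  constructor
  · rintro ⟨σ, hσ⟩ U hU
    obtain ⟨⟨u, huU, hut⟩, ⟨v, hvU, hvf⟩⟩ := hσ U hU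
    refine ⟨⟨u, huU, ?_⟩, ⟨v, hvU, ?_⟩⟩
    · intro hc
      obtain ⟨-, w, hw, hwf⟩ := hσ _ hc
      have : w = u := by simpa using hw
      rw [this, hut] at hwf; exact Bool.noConfusion hwf
    · intro hc
      obtain ⟨⟨w, hw, hwt⟩, -⟩ := hσ _ hc
      have : w = v := by simpa using hw
      rw [this, hvf] at hwt; exact Bool.noConfusion hwt
  · intro hRHS
    set B : Set V := {v | ({v} : Set V) ∈ F} with hB
    set C : Set (Set V) := {S | B ⊆ S ∧ ∀ W ∈ F, W ∪ S ≠ Set.univ} with hC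
    have hBC : B ∈ C := by
      refine ⟨subset_rfl, fun W hW hcon => ?_⟩
      obtain ⟨-, v, hvW, hvB⟩ := hRHS W hW
      have : v ∈ W ∪ B := hcon ▸ Set.mem_univ v
      rcases this with h | h
      · exact hvW h
      · exact hvB h
    obtain ⟨S, hSC, hmax⟩ :=
      (Set.toFinite C).exists_maximalFor Set.ncard C ⟨B, hBC⟩
    obtain ⟨hBS, hP⟩ := hSC
    -- maximality: adding any new element breaks feasibility
    have hmax' : ∀ u ∉ S, insert u S ∉ C := by
      intro u hu hin
      have hsub : S ⊆ insert u S := Set.subset_insert u S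
      have hle : S.ncard ≤ (insert u S).ncard :=
        Set.ncard_le_ncard hsub (Set.toFinite _)
      have heq := hmax hin hle
      have : (insert u S).ncard = S.ncard + 1 :=
        Set.ncard_insert_of_notMem hu (Set.toFinite S)
      omega
    -- key claim: S meets every member of F
    have key : ∀ n : ℕ, ∀ U ∈ F, U.ncard ≤ n → (U ∩ S).Nonempty := by
      intro n
      induction n with
      | zero =>
        intro U hU hle
        have : U.ncard = 0 := Nat.le_zero.mp hle
        have hempty : U = ∅ := (Set.ncard_eq_zero (Set.toFinite U)).mp this
        exact absurd hempty (hF U hU).1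
      | succ n ih =>
        intro U hU hle
        by_contra hne
        have hdisj : U ∩ S = ∅ := Set.not_nonempty_iff_eq_empty.mp hne
        obtain ⟨⟨u, huU, hucomp⟩, -⟩ := hRHS U hU
        have huS : u ∉ S := fun h =>
          (Set.eq_empty_iff_forall_notMem.mp hdisj u) ⟨huU, h⟩
        have hins : insert u S ∉ C := hmax' u huS
        have hBins : B ⊆ insert u S := hBS.trans (Set.subset_insert u S)
        have : ∃ W ∈ F, W ∪ insert u S = Set.univ := by
          by_contra hc
          push_neg at hc
          exact hins ⟨hBins, hc⟩
        obtain ⟨W, hW, hWuniv⟩ := this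
        have hWS : W ∪ S ≠ Set.univ := hP W hW
        have huW : u ∉ W := by
          intro huWmem
          apply hWS
          rw [← hWuniv]
          ext x
          simp only [Set.mem_union, Set.mem_insert_iff]
          constructor
          · rintro (h | h); exacts [Or.inl h, Or.inr (Or.inr h)]
          · rintro (h | h | h)
            exacts [Or.inl h, Or.inl (h ▸ huWmem), Or.inr h]
        have hcov : ∀ x, x ∉ W → x ∉ S → x = u := by
          intro x hxW hxS
          have : x ∈ W ∪ insert u S := hWuniv ▸ Set.mem_univ x
          rcases this with h | h
          · exact absurd h hxW
          · rcases h with h | h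
            · exact h
            · exact absurd h hxS
        by_cases hUu : U = {u}
        · have : u ∈ B := by rw [hB]; exact Set.mem_setOf.mpr (hUu ▸ hU)
          exact huS (hBS this)
        · have hx : ∃ x ∈ U, x ≠ u := by
            by_contra hc
            push_neg at hc
            apply hUu
            apply Set.Subset.antisymm
            · intro y hy; exact hc y hy
            · intro y hy
              have : y = u := hy
              exact this ▸ huU
          obtain ⟨x, hxU, hxu⟩ := hx
          have hxS : x ∉ S := fun h =>
            (Set.eq_empty_iff_forall_notMem.mp hdisj x) ⟨hxU, h⟩
          have hxW : x ∈ W := by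
            by_contra hc
            exact hxu (hcov x hc hxS)
          have hUWne : (U ∩ W).Nonempty := ⟨x, hxU, hxW⟩
          by_cases hUW : U ∪ W = Set.univ
          · -- then W = {u}ᶜ ∈ F, contradiction
            have hSW : S ⊆ W := by
              intro s hs
              have : s ∈ U ∪ W := hUW ▸ Set.mem_univ s
              rcases this with h | h
              · exact absurd hs ((Set.eq_empty_iff_forall_notMem.mp hdisj s) ⟨h, ·⟩ |>.elim)
              · exact h
            have hWeq : W = ({u}ᶜ : Set V) := by
              ext y
              simp only [Set.mem_compl_iff, Set.mem_singleton_iff]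
              constructor
              · intro hy hyu; exact huW (hyu ▸ hy)
              · intro hy
                by_contra hc
                exact hy (hcov y hc (fun h => hc (hSW h)))
            exact hucomp (hWeq ▸ hW)
          · obtain ⟨hinter, -⟩ := hcross U hU W hW hUWne hUW
            have hUWeq : U ∩ W = U \ {u} := by
              ext y
              simp only [Set.mem_inter_iff, Set.mem_diff, Set.mem_singleton_iff]
              constructor
              · rintro ⟨hyU, hyW⟩
                exact ⟨hyU, fun h => huW (h ▸ hyW)⟩
              · rintro ⟨hyU, hyu⟩
                have hyS : y ∉ S := fun h =>
                  (Set.eq_empty_iff_forall_notMem.mp hdisj y) ⟨hyU, h⟩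
                refine ⟨hyU, ?_⟩
                by_contra hc
                exact hyu (hcov y hc hyS)
            rw [hUWeq] at hinter
            have hlt : (U \ {u}).ncard < U.ncard :=
              Set.ncard_diff_singleton_lt_of_mem huU (Set.toFinite U)
            have : (U \ {u}).ncard ≤ n := by omega
            obtain ⟨y, hy1, hy2⟩ := ih (U \ {u}) hinter this
            exact (Set.eq_empty_iff_forall_notMem.mp hdisj y) ⟨hy1.1, hy2⟩
    refine ⟨fun v => decide (v ∈ S), fun U hU => ?_⟩
    constructor
    · obtain ⟨u, huU, huS⟩ := key (Fintype.card V) U hU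
        ((Set.ncard_le_ncard (Set.subset_univ U) Set.finite_univ).trans
          (by simp [Set.ncard_univ]))
      exact ⟨u, huU, by simp [huS]⟩
    · have := hP U hU
      obtain ⟨v, hv⟩ := Set.ne_univ_iff_exists_notMem _ |>.mp this
      simp only [Set.mem_union, not_or] at hv
      exact ⟨v, hv.1, by simp [hv.2]⟩
end

section
/- A crossing family F over a finite set V admits a ∩∪-closed cosigning if and only if: for all Z, T ∈ F with Z ∩ T ≠ ∅, the set Z ∩ T includes an element u such that V\{u} ≠ B ∪ W for all B, W ∈ F; and for all X, Y ∈ F with X ∪ Y ≠ V, there exists an element v ∉ X ∪ Y such that {v} ≠ H ∩ G for all G, H ∈ F. -/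
/-!
A cosigning must put a `+` in every nonempty `X ∩ Y`, but not at a point `u` with
`V \ {u} = B ∪ W`, since `u` is the only candidate for a `−` outside `B ∪ W`; dually for the
`−` outside `X ∪ Y` and singletons `{v} = H ∩ G`. This gives necessity.

For sufficiency, let the positive set `R` be inclusion-minimal among the sets that avoid those
forced points and meet every nonempty `X ∩ Y`. Suppose `(X ∪ Y)ᶜ ⊆ R` for some co-intersecting
`X, Y`, and pick `v ∉ X ∪ Y` with `{v}` not a pairwise intersection. Minimality gives `Z, W ∈ F`
with `Z ∩ W ∩ R = {v}`. If `Z ∩ W` misses `X ∪ Y`, then `Z ∩ W ⊆ R`, so `Z ∩ W = {v}`.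
Otherwise `Z ∩ W` meets some `C ∈ {X, Y}`, and uncrossing `Z` (resp. `W`) with `C` forces
`Z ∪ C = V` (resp. `W ∪ C = V`); hence `(X ∪ Y)ᶜ ⊆ Z ∩ W ∩ R = {v}`, so `v` is a forced point.
-/

open Set

namespace CrossingFamily

variable {V : Type*} {F : Set (Set V)}

def IsCrossing (F : Set (Set V)) : Prop :=
  ∀ U ∈ F, ∀ W ∈ F, (U ∩ W).Nonempty → U ∪ W ≠ univ → U ∩ W ∈ F ∧ U ∪ W ∈ F

/-- A cosigning must give these points sign `−`. -/
def forcedMinus (F : Set (Set V)) : Set V :=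
  {u | ∃ B ∈ F, ∃ W ∈ F, {u}ᶜ = B ∪ W}

def HitsInters (F : Set (Set V)) (R : Set V) : Prop :=
  ∀ X ∈ F, ∀ Y ∈ F, (X ∩ Y).Nonempty → (X ∩ Y ∩ R).Nonempty

lemma compl_singleton_ne_union_of_sign_eq_true {σ : V → Bool}
    (hneg : ∀ X ∈ F, ∀ Y ∈ F, X ∪ Y ≠ univ → ∃ v ∉ X ∪ Y, σ v = false)
    {u : V} (hu : σ u = true) {B W : Set V} (hB : B ∈ F) (hW : W ∈ F) :
    ({u}ᶜ : Set V) ≠ B ∪ W := by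
  intro h
  have hBW : B ∪ W ≠ univ := by rw [← h, Ne, compl_univ_iff]; exact singleton_ne_empty u
  obtain ⟨v, hv, hσv⟩ := hneg B hB W hW hBW
  rw [← h, notMem_compl_iff, mem_singleton_iff] at hv
  simp [hv, hu] at hσv

lemma singleton_ne_inter_of_sign_eq_false {σ : V → Bool}
    (hpos : ∀ X ∈ F, ∀ Y ∈ F, (X ∩ Y).Nonempty → ∃ u ∈ X ∩ Y, σ u = true)
    {v : V} (hv : σ v = false) {G H : Set V} (hG : G ∈ F) (hH : H ∈ F) :
    ({v} : Set V) ≠ H ∩ G := by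
  intro h
  obtain ⟨u, hu, hσu⟩ := hpos H hH G hG (h ▸ singleton_nonempty v)
  rw [← h, mem_singleton_iff] at hu
  simp [hu, hv] at hσu

lemma hitsInters_compl_forcedMinus
    (h : ∀ Z ∈ F, ∀ T ∈ F, (Z ∩ T).Nonempty →
      ∃ u ∈ Z ∩ T, ∀ B ∈ F, ∀ W ∈ F, ({u}ᶜ : Set V) ≠ B ∪ W) :
    HitsInters F (forcedMinus F)ᶜ := by
  intro Z hZ T hT hZT
  obtain ⟨u, hu, hu'⟩ := h Z hZ T hT hZT
  exact ⟨u, hu, fun ⟨B, hB, W, hW, hBW⟩ => hu' B hB W hW hBW⟩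

lemma exists_inter_inter_eq_singleton {R : Set V} (hR : Minimal (HitsInters F) R) {v : V}
    (hv : v ∈ R) : ∃ Z ∈ F, ∃ W ∈ F, Z ∩ W ∩ R = {v} := by
  have hlt : R \ {v} < R := sdiff_singleton_ssubset.mpr hv
  obtain ⟨Z, hZ, W, hW, hZW, hmiss⟩ : ∃ Z ∈ F, ∃ W ∈ F, (Z ∩ W).Nonempty ∧
      ¬ (Z ∩ W ∩ (R \ {v})).Nonempty := by
    simpa [HitsInters] using hR.not_prop_of_lt hlt
  refine ⟨Z, hZ, W, hW, ?_⟩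
  obtain ⟨u, hu⟩ := hR.prop Z hZ W hW hZW
  have hsub : Z ∩ W ∩ R ⊆ {v} := fun t ht => by
    by_contra htv
    exact hmiss ⟨t, ht.1, ht.2, htv⟩
  obtain rfl : u = v := hsub hu
  exact hsub.antisymm (singleton_subset_iff.mpr hu)

/-- Otherwise `Z ∩ C ∈ F`, and `R` meets `Z ∩ C ∩ W ⊆ Z ∩ W ∩ R = {v}` inside `C`. -/
lemma union_eq_univ_of_inter_inter_eq_singleton
    (hcross : IsCrossing F) {R : Set V} (hR : HitsInters F R) {v : V} {Z W C : Set V}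
    (hZ : Z ∈ F) (hW : W ∈ F) (hC : C ∈ F) (hvC : v ∉ C) (hZWR : Z ∩ W ∩ R = {v})
    (hmeet : (Z ∩ W ∩ C).Nonempty) :
    Z ∪ C = univ := by
  by_contra hZC
  obtain ⟨t, ⟨htZ, htW⟩, htC⟩ := hmeet
  have hZCF := (hcross Z hZ C hC ⟨t, htZ, htC⟩ hZC).1
  obtain ⟨u, ⟨⟨huZ, huC⟩, huW⟩, huR⟩ :=
    hR (Z ∩ C) hZCF W hW ⟨t, ⟨htZ, htC⟩, htW⟩
  have : u = v := hZWR.subset ⟨⟨huZ, huW⟩, huR⟩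
  exact hvC (this ▸ huC)

lemma compl_subset_inter_of_inter_inter_eq_singleton
    (hcross : IsCrossing F) {R : Set V} (hR : HitsInters F R) {v : V} {Z W C : Set V}
    (hZ : Z ∈ F) (hW : W ∈ F) (hC : C ∈ F) (hvC : v ∉ C) (hZWR : Z ∩ W ∩ R = {v})
    (hmeet : (Z ∩ W ∩ C).Nonempty) :
    Cᶜ ⊆ Z ∩ W := by
  have hZC := union_eq_univ_of_inter_inter_eq_singleton hcross hR hZ hW hC hvC hZWR hmeet
  have hWC := union_eq_univ_of_inter_inter_eq_singleton hcross hR hW hZ hC hvC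
    (by rwa [inter_comm W]) (by rwa [inter_comm W])
  intro t ht
  exact ⟨(hZC.symm ▸ mem_univ t).resolve_right ht,
    (hWC.symm ▸ mem_univ t).resolve_right ht⟩

lemma exists_notMem_union_notMem_of_minimal
    (hcross : IsCrossing F) {R : Set V} (hR : Minimal (HitsInters F) R)
    (hRF : R ⊆ (forcedMinus F)ᶜ)
    {X Y : Set V} (hX : X ∈ F) (hY : Y ∈ F) {v : V} (hvXY : v ∉ X ∪ Y)
    (hv : ∀ G ∈ F, ∀ H ∈ F, ({v} : Set V) ≠ H ∩ G) :
    ∃ t ∉ X ∪ Y, t ∉ R := by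
  by_contra! hXYR
  obtain ⟨Z, hZ, W, hW, hZWR⟩ := exists_inter_inter_eq_singleton hR (hXYR v hvXY)
  by_cases hmeet : (Z ∩ W ∩ X).Nonempty ∨ (Z ∩ W ∩ Y).Nonempty
  · have hsub : (X ∪ Y)ᶜ ⊆ Z ∩ W := by
      rcases hmeet with hmeet | hmeet
      · exact (compl_subset_compl.mpr subset_union_left).trans
          (compl_subset_inter_of_inter_inter_eq_singleton hcross hR.prop hZ hW hX
            (fun h => hvXY (.inl h)) hZWR hmeet)
      · exact (compl_subset_compl.mpr subset_union_right).trans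
          (compl_subset_inter_of_inter_inter_eq_singleton hcross hR.prop hZ hW hY
            (fun h => hvXY (.inr h)) hZWR hmeet)
    have hsingle : (X ∪ Y)ᶜ = {v} :=
      (hZWR ▸ subset_inter hsub fun t ht => hXYR t ht).antisymm
        (singleton_subset_iff.mpr hvXY)
    exact hRF (hXYR v hvXY) ⟨X, hX, Y, hY, by rw [← hsingle, compl_compl]⟩
  · have hsub : Z ∩ W ⊆ R := fun t ht =>
      hXYR t fun htXY => hmeet (htXY.imp (fun h => ⟨t, ht, h⟩) fun h => ⟨t, ht, h⟩)
    exact hv W hW Z hZ (by rw [← hZWR, inter_eq_left.mpr hsub])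

end CrossingFamily

open CrossingFamily in
theorem stmt_2_general {V : Type*} [Fintype V] (F : Set (Set V))
    (hcross : ∀ U ∈ F, ∀ W ∈ F, (U ∩ W).Nonempty → U ∪ W ≠ Set.univ →
      U ∩ W ∈ F ∧ U ∪ W ∈ F) :
    (∃ σ : V → Bool,
        (∀ X ∈ F, ∀ Y ∈ F, (X ∩ Y).Nonempty → ∃ u ∈ X ∩ Y, σ u = true) ∧
        (∀ X ∈ F, ∀ Y ∈ F, X ∪ Y ≠ Set.univ → ∃ v ∉ X ∪ Y, σ v = false)) ↔
      ((∀ Z ∈ F, ∀ T ∈ F, (Z ∩ T).Nonempty →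
          ∃ u ∈ Z ∩ T, ∀ B ∈ F, ∀ W ∈ F, ({u}ᶜ : Set V) ≠ B ∪ W) ∧
       (∀ X ∈ F, ∀ Y ∈ F, X ∪ Y ≠ Set.univ →
          ∃ v ∉ X ∪ Y, ∀ G ∈ F, ∀ H ∈ F, ({v} : Set V) ≠ H ∩ G)) := by
  constructor
  · rintro ⟨σ, hpos, hneg⟩
    refine ⟨fun Z hZ T hT hZT => ?_, fun X hX Y hY hXY => ?_⟩
    · obtain ⟨u, hu, hσu⟩ := hpos Z hZ T hT hZT
      exact ⟨u, hu, fun B hB W hW => compl_singleton_ne_union_of_sign_eq_true hneg hσu hB hW⟩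
    · obtain ⟨v, hv, hσv⟩ := hneg X hX Y hY hXY
      exact ⟨v, hv, fun G hG H hH => singleton_ne_inter_of_sign_eq_false hpos hσv hG hH⟩
  · rintro ⟨hinter, hunion⟩
    obtain ⟨R, hRF, hR⟩ := exists_minimal_le_of_wellFoundedLT (HitsInters F) _
      (hitsInters_compl_forcedMinus hinter)
    classical
    refine ⟨fun v => decide (v ∈ R), fun X hX Y hY hXY => ?_, fun X hX Y hY hXY => ?_⟩
    · obtain ⟨u, hu, huR⟩ := hR.prop X hX Y hY hXY
      exact ⟨u, hu, decide_eq_true huR⟩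
    · obtain ⟨v, hvXY, hv⟩ := hunion X hX Y hY hXY
      obtain ⟨t, htXY, htR⟩ := exists_notMem_union_notMem_of_minimal hcross hR hRF hX hY hvXY hv
      exact ⟨t, htXY, decide_eq_false htR⟩

/-- A crossing family `F` over a finite set `V` admits a `∩∪`-closed
cosigning if and only if: for all `Z, T ∈ F` that intersect, `Z ∩ T` includes an element `u`
with `V \ {u} ≠ B ∪ W` for all `B, W ∈ F`; and for all `X, Y ∈ F` that co-intersect, there is
an element `v ∉ X ∪ Y` with `{v} ≠ H ∩ G` for all `G, H ∈ F`. (`true` = `+`, `false` = `−`.) -/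
theorem stmt_2 {V : Type*} [Fintype V] (F : Set (Set V))
    (hF : ∀ U ∈ F, U ≠ ∅ ∧ U ≠ Set.univ)
    (hcross : ∀ U ∈ F, ∀ W ∈ F, (U ∩ W).Nonempty → U ∪ W ≠ Set.univ →
      U ∩ W ∈ F ∧ U ∪ W ∈ F) :
    (∃ σ : V → Bool,
        (∀ X ∈ F, ∀ Y ∈ F, (X ∩ Y).Nonempty → ∃ u ∈ X ∩ Y, σ u = true) ∧
        (∀ X ∈ F, ∀ Y ∈ F, X ∪ Y ≠ Set.univ → ∃ v ∉ X ∪ Y, σ v = false)) ↔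
      ((∀ Z ∈ F, ∀ T ∈ F, (Z ∩ T).Nonempty →
          ∃ u ∈ Z ∩ T, ∀ B ∈ F, ∀ W ∈ F, ({u}ᶜ : Set V) ≠ B ∪ W) ∧
       (∀ X ∈ F, ∀ Y ∈ F, X ∪ Y ≠ Set.univ →
          ∃ v ∉ X ∪ Y, ∀ G ∈ F, ∀ H ∈ F, ({v} : Set V) ≠ H ∩ G)) :=
  stmt_2_general F hcross
end

section
/- Let (V, σ, F) satisfy properties P1–P4, and let E be a set of arcs from negative to positive vertices. Then the subfamily F' of sets in F not covered by any arc of E again satisfies properties P1–P4 (in particular F' is a crossing family). -/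
/-!
An arc `(m, p)` covering `U ∩ W` leaves `U` or `W` through `m` while entering both through `p`,
and one covering `U ∪ W` enters `U` or `W` through `p` while `m` lies outside both; so the
uncovered sets are closed under the crossing operations. P2–P4 only constrain members of `F`,
so they pass to any subfamily.
-/

/-- The subfamily of sets of `F` not covered by any arc of `E`
(an arc `(m, p)` covers `U` if `m ∉ U` and `p ∈ U`). -/
def uncoveredFam {V : Type*} (F : Set (Set V)) (E : Set (V × V)) : Set (Set V) :=
  {U ∈ F | ∀ e ∈ E, ¬ (e.1 ∉ U ∧ e.2 ∈ U)}

section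

variable {V : Type*} {F : Set (Set V)} {E : Set (V × V)} {U W : Set V}

theorem inter_mem_uncoveredFam (hU : U ∈ uncoveredFam F E) (hW : W ∈ uncoveredFam F E)
    (hUW : U ∩ W ∈ F) : U ∩ W ∈ uncoveredFam F E := by
  refine ⟨hUW, fun e he ⟨hm, hp⟩ => ?_⟩
  rw [Set.mem_inter_iff, not_and_or] at hm
  rcases hm with hmU | hmW
  · exact hU.2 e he ⟨hmU, hp.1⟩
  · exact hW.2 e he ⟨hmW, hp.2⟩

theorem union_mem_uncoveredFam (hU : U ∈ uncoveredFam F E) (hW : W ∈ uncoveredFam F E)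
    (hUW : U ∪ W ∈ F) : U ∪ W ∈ uncoveredFam F E := by
  refine ⟨hUW, fun e he ⟨hm, hp⟩ => ?_⟩
  rw [Set.mem_union, not_or] at hm
  rcases hp with hpU | hpW
  · exact hU.2 e he ⟨hm.1, hpU⟩
  · exact hW.2 e he ⟨hm.2, hpW⟩

end

theorem stmt_6_general {V : Type*} (F : Set (Set V)) (σ : V → Bool)
    (hP1 : ∀ U ∈ F, ∀ W ∈ F, (U ∩ W).Nonempty → U ∪ W ≠ Set.univ →
      U ∩ W ∈ F ∧ U ∪ W ∈ F)
    (hP2 : ∀ U ∈ F, (∃ u ∈ U, σ u = true) ∧ (∃ v ∉ U, σ v = false))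
    (hP3 : ∀ U ∈ F, ∀ W ∈ F, U ∩ W = ∅ → ∃ v ∉ U ∪ W, σ v = false)
    (hP4 : ∀ U ∈ F, ∀ W ∈ F, U ∪ W = Set.univ → ∃ u ∈ U ∩ W, σ u = true)
    (E : Set (V × V)) :
    (∀ U ∈ uncoveredFam F E, ∀ W ∈ uncoveredFam F E,
        (U ∩ W).Nonempty → U ∪ W ≠ Set.univ →
        U ∩ W ∈ uncoveredFam F E ∧ U ∪ W ∈ uncoveredFam F E) ∧
    (∀ U ∈ uncoveredFam F E, (∃ u ∈ U, σ u = true) ∧ (∃ v ∉ U, σ v = false)) ∧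
    (∀ U ∈ uncoveredFam F E, ∀ W ∈ uncoveredFam F E, U ∩ W = ∅ →
        ∃ v ∉ U ∪ W, σ v = false) ∧
    (∀ U ∈ uncoveredFam F E, ∀ W ∈ uncoveredFam F E, U ∪ W = Set.univ →
        ∃ u ∈ U ∩ W, σ u = true) := by
  refine ⟨fun U hU W hW hne hne_univ => ?_, fun U hU => hP2 U hU.1,
    fun U hU W hW => hP3 U hU.1 W hW.1, fun U hU W hW => hP4 U hU.1 W hW.1⟩
  obtain ⟨hinter, hunion⟩ := hP1 U hU.1 W hW.1 hne hne_univ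
  exact ⟨inter_mem_uncoveredFam hU hW hinter, union_mem_uncoveredFam hU hW hunion⟩

/-- Let `(V, σ, F)` satisfy P1–P4 and let `E` be a set of arcs from
negative to positive vertices. Then the subfamily `F'` of sets in `F` not covered by any
arc of `E` again satisfies P1–P4; in particular `F'` is a crossing family.
(`true` = `+`, `false` = `−`.) -/
theorem stmt_6 {V : Type*} [Fintype V] (F : Set (Set V)) (σ : V → Bool)
    (hF : ∀ U ∈ F, U ≠ ∅ ∧ U ≠ Set.univ)
    (hP1 : ∀ U ∈ F, ∀ W ∈ F, (U ∩ W).Nonempty → U ∪ W ≠ Set.univ →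
      U ∩ W ∈ F ∧ U ∪ W ∈ F)
    (hP2 : ∀ U ∈ F, (∃ u ∈ U, σ u = true) ∧ (∃ v ∉ U, σ v = false))
    (hP3 : ∀ U ∈ F, ∀ W ∈ F, U ∩ W = ∅ → ∃ v ∉ U ∪ W, σ v = false)
    (hP4 : ∀ U ∈ F, ∀ W ∈ F, U ∪ W = Set.univ → ∃ u ∈ U ∩ W, σ u = true)
    (E : Set (V × V)) (hE : ∀ e ∈ E, σ e.1 = false ∧ σ e.2 = true) :
    (∀ U ∈ uncoveredFam F E, ∀ W ∈ uncoveredFam F E,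
        (U ∩ W).Nonempty → U ∪ W ≠ Set.univ →
        U ∩ W ∈ uncoveredFam F E ∧ U ∪ W ∈ uncoveredFam F E) ∧
    (∀ U ∈ uncoveredFam F E, (∃ u ∈ U, σ u = true) ∧ (∃ v ∉ U, σ v = false)) ∧
    (∀ U ∈ uncoveredFam F E, ∀ W ∈ uncoveredFam F E, U ∩ W = ∅ →
        ∃ v ∉ U ∪ W, σ v = false) ∧
    (∀ U ∈ uncoveredFam F E, ∀ W ∈ uncoveredFam F E, U ∪ W = Set.univ →
        ∃ u ∈ U ∩ W, σ u = true) :=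
  stmt_6_general F σ hP1 hP2 hP3 hP4 E
end

section
/- Let (V, σ, F) satisfy P0–P4 and AP1 with four consecutive vertices m2, m1, p1, p2 on the circle having signs −, −, +, + respectively. Then there do not exist sets U1, U2 ∈ F such that U1 is m1-dangerous (U1 excludes m1 and all other negative vertices lie in U1) and U2 is p1-dangerous (p1 is the only positive vertex of U2). -/
/-!
Since `p1 = m1 + 1` lies in `U2` and `m1` is negative, AP1 forces `m1 ∈ U2`; together with
the `m1`-dangerous `U1` this puts every negative vertex in `U1 ∪ U2`, which by P1–P3 is only
possible if `U1 ∪ U2` is the whole circle. Then P4 yields a positive vertex of `U1 ∩ U2`, i.e.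
`p1 ∈ U1`, and AP1 applied to `U1` puts `m1` into `U1`, a contradiction.
-/

/-- A set of vertices on the circle `ZMod n` is a circular interval if it consists of
consecutive vertices. -/
def IsCircularInterval {n : ℕ} (U : Set (ZMod n)) : Prop :=
  ∃ (a : ZMod n) (k : ℕ), U = {x | ∃ i : ℕ, i < k ∧ x = a + (i : ZMod n)}

section

variable {V : Type*} {σ : V → Bool} {F : Set (Set V)}

theorem mem_of_add_one_mem [Add V] [One V]
    (hAP1 : ∀ U ∈ F, ∀ u ∈ U, σ u = true →
      ∀ u', u' ∉ U → (u' = u + 1 ∨ u = u' + 1) → σ u' = true)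
    {U : Set V} (hU : U ∈ F) {v : V} (hv : v + 1 ∈ U) (hσv1 : σ (v + 1) = true)
    (hσv : σ v = false) : v ∈ U := by
  by_contra hvU
  simpa [hσv] using hAP1 U hU _ hv hσv1 v hvU (Or.inr rfl)

theorem mem_union_of_dangerous {U W : Set V} {m : V} (hU : ∀ x ∉ U, σ x = false → x = m)
    (hm : m ∈ W) {v : V} (hv : σ v = false) : v ∈ U ∪ W := by
  by_cases hvU : v ∈ U
  · exact Or.inl hvU
  · exact Or.inr (hU v hvU hv ▸ hm)

theorem union_eq_univ_of_neg_mem_union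
    (hP1 : ∀ U ∈ F, ∀ W ∈ F, (U ∩ W).Nonempty → U ∪ W ≠ Set.univ →
      U ∩ W ∈ F ∧ U ∪ W ∈ F)
    (hP2 : ∀ U ∈ F, ∃ v ∉ U, σ v = false)
    (hP3 : ∀ U ∈ F, ∀ W ∈ F, U ∩ W = ∅ → ∃ v ∉ U ∪ W, σ v = false)
    {U W : Set V} (hU : U ∈ F) (hW : W ∈ F) (hneg : ∀ v, σ v = false → v ∈ U ∪ W) :
    U ∪ W = Set.univ := by
  have hUW : (U ∩ W).Nonempty := by
    rw [Set.nonempty_iff_ne_empty]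
    intro hdisj
    obtain ⟨v, hvUW, hv⟩ := hP3 U hU W hW hdisj
    exact hvUW (hneg v hv)
  by_contra hcov
  obtain ⟨v, hvUW, hv⟩ := hP2 _ (hP1 U hU W hW hUW hcov).2
  exact hvUW (hneg v hv)

end

theorem stmt_10_general {n : ℕ}
    (σ : ZMod n → Bool) (F : Set (Set (ZMod n)))
    (hP1 : ∀ U ∈ F, ∀ W ∈ F, (U ∩ W).Nonempty → U ∪ W ≠ Set.univ →
      U ∩ W ∈ F ∧ U ∪ W ∈ F)
    (hP2 : ∀ U ∈ F, (∃ u ∈ U, σ u = true) ∧ (∃ v ∉ U, σ v = false))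
    (hP3 : ∀ U ∈ F, ∀ W ∈ F, U ∩ W = ∅ → ∃ v ∉ U ∪ W, σ v = false)
    (hP4 : ∀ U ∈ F, ∀ W ∈ F, U ∪ W = Set.univ → ∃ u ∈ U ∩ W, σ u = true)
    (hAP1 : ∀ U ∈ F, ∀ u ∈ U, σ u = true →
      ∀ u', u' ∉ U → (u' = u + 1 ∨ u = u' + 1) → σ u' = true)
    (m2 m1 p1 : ZMod n)
    (hm1 : m1 = m2 + 1) (hp1 : p1 = m2 + 2)
    (hσm1 : σ m1 = false)
    (hσp1 : σ p1 = true) :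
    ¬ ∃ U1 ∈ F, ∃ U2 ∈ F,
        (m1 ∉ U1 ∧ ∀ x ∉ U1, σ x = false → x = m1) ∧
        (p1 ∈ U2 ∧ ∀ x ∈ U2, σ x = true → x = p1) := by
  rintro ⟨U1, hU1, U2, hU2, ⟨hm1U1, hU1dang⟩, ⟨hp1U2, hU2dang⟩⟩
  obtain rfl : p1 = m1 + 1 := by rw [hp1, hm1, add_assoc, one_add_one_eq_two]
  have hm1U2 : m1 ∈ U2 := mem_of_add_one_mem hAP1 hU2 hp1U2 hσp1 hσm1
  have hcov : U1 ∪ U2 = Set.univ :=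
    union_eq_univ_of_neg_mem_union hP1 (fun U hU => (hP2 U hU).2) hP3 hU1 hU2
      fun v hv => mem_union_of_dangerous hU1dang hm1U2 hv
  obtain ⟨u, ⟨huU1, huU2⟩, hu⟩ := hP4 U1 hU1 U2 hU2 hcov
  obtain rfl := hU2dang u huU2 hu
  exact hm1U1 (mem_of_add_one_mem hAP1 hU1 huU1 hσp1 hσm1)

/-- Let `(V, σ, F)` satisfy P0–P4 and AP1, with four consecutive vertices
`m2, m1, p1, p2` on the circle signed `−, −, +, +`. Then there do not exist `U1, U2 ∈ F`
with `U1` an `m1`-dangerous set (`m1` is the unique negative vertex outside `U1`) and `U2` a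
`p1`-dangerous set (`p1` is the unique positive vertex of `U2`). (`true` = `+`, `false` = `−`;
the circle is `ZMod n`.) -/
theorem stmt_10 {n : ℕ} (hn : 4 ≤ n)
    (σ : ZMod n → Bool) (F : Set (Set (ZMod n)))
    (hF : ∀ U ∈ F, U ≠ ∅ ∧ U ≠ Set.univ)
    (hP0 : ∀ U ∈ F, IsCircularInterval U)
    (hP1 : ∀ U ∈ F, ∀ W ∈ F, (U ∩ W).Nonempty → U ∪ W ≠ Set.univ →
      U ∩ W ∈ F ∧ U ∪ W ∈ F)
    (hP2 : ∀ U ∈ F, (∃ u ∈ U, σ u = true) ∧ (∃ v ∉ U, σ v = false))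
    (hP3 : ∀ U ∈ F, ∀ W ∈ F, U ∩ W = ∅ → ∃ v ∉ U ∪ W, σ v = false)
    (hP4 : ∀ U ∈ F, ∀ W ∈ F, U ∪ W = Set.univ → ∃ u ∈ U ∩ W, σ u = true)
    (hAP1 : ∀ U ∈ F, ∀ u ∈ U, σ u = true →
      ∀ u', u' ∉ U → (u' = u + 1 ∨ u = u' + 1) → σ u' = true)
    (m2 m1 p1 p2 : ZMod n)
    (hm1 : m1 = m2 + 1) (hp1 : p1 = m2 + 2) (hp2 : p2 = m2 + 3)
    (hσm2 : σ m2 = false) (hσm1 : σ m1 = false)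
    (hσp1 : σ p1 = true) (hσp2 : σ p2 = true) :
    ¬ ∃ U1 ∈ F, ∃ U2 ∈ F,
        (m1 ∉ U1 ∧ ∀ x ∉ U1, σ x = false → x = m1) ∧
        (p1 ∈ U2 ∧ ∀ x ∈ U2, σ x = true → x = p1) :=
  stmt_10_general σ F hP1 hP2 hP3 hP4 hAP1 m2 m1 p1 hm1 hp1 hσm1 hσp1
end

section
/- Let (V, σ, F) satisfy P0–P4, AP1 and AP2. If four consecutive vertices m2, m1, p, m3 on the circle have signs −, −, +, −, then m1 is removable: there is no m1-dangerous set and no m1-dangerous pair in F. -/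
section Removability

variable {α : Type*} [Add α] [One α] {σ : α → Bool} {F : Set (Set α)} {S : Set α}

theorem sign_eq_of_adjacent_of_mem_of_not_mem
    (hAP1 : ∀ U ∈ F, ∀ u ∈ U, σ u = true →
      ∀ u', u' ∉ U → (u' = u + 1 ∨ u = u' + 1) → σ u' = true)
    (hAP2 : ∀ U ∈ F, ∀ u ∈ U, σ u = false →
      ∀ u', u' ∉ U → (u' = u + 1 ∨ u = u' + 1) → σ u' = false)
    (hS : ∀ x ∈ S, ∃ X ∈ F, x ∈ X ∧ X ⊆ S)
    {u u' : α} (hu : u ∈ S) (hu' : u' ∉ S) (hadj : u' = u + 1 ∨ u = u' + 1) :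
    σ u' = σ u := by
  obtain ⟨X, hXF, huX, hXS⟩ := hS u hu
  have hu'X : u' ∉ X := fun h => hu' (hXS h)
  cases hσu : σ u
  · exact hAP2 X hXF u huX hσu u' hu'X hadj
  · exact hAP1 X hXF u huX hσu u' hu'X hadj

theorem false_of_negative_outside_eq [IsRightCancelAdd α]
    (hAP1 : ∀ U ∈ F, ∀ u ∈ U, σ u = true →
      ∀ u', u' ∉ U → (u' = u + 1 ∨ u = u' + 1) → σ u' = true)
    (hAP2 : ∀ U ∈ F, ∀ u ∈ U, σ u = false →
      ∀ u', u' ∉ U → (u' = u + 1 ∨ u = u' + 1) → σ u' = false)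
    (hS : ∀ x ∈ S, ∃ X ∈ F, x ∈ X ∧ X ⊆ S)
    {m2 m1 p m3 : α} (hm1 : m1 = m2 + 1) (hp : p = m1 + 1) (hm3 : m3 = p + 1)
    (hσm2 : σ m2 = false) (hσm1 : σ m1 = false) (hσp : σ p = true) (hσm3 : σ m3 = false)
    (hm1S : m1 ∉ S) (houtside : ∀ x ∉ S, σ x = false → x = m1) : False := by
  have hpS : p ∉ S := fun hpS => by
    simpa [hσm1, hσp] using
      sign_eq_of_adjacent_of_mem_of_not_mem hAP1 hAP2 hS hpS hm1S (Or.inr hp)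
  have hm3S : m3 ∉ S := fun hm3S => by
    simpa [hσm3, hσp] using
      sign_eq_of_adjacent_of_mem_of_not_mem hAP1 hAP2 hS hm3S hpS (Or.inr hm3)
  have hm2p : m2 = p := add_right_cancel (b := 1) <| by
    rw [← hm1, ← hm3, houtside m3 hm3S hσm3]
  simp [hm2p, hσp] at hσm2

end Removability

theorem stmt_11_general {n : ℕ}
    (σ : ZMod n → Bool) (F : Set (Set (ZMod n)))
    (hAP1 : ∀ U ∈ F, ∀ u ∈ U, σ u = true →
      ∀ u', u' ∉ U → (u' = u + 1 ∨ u = u' + 1) → σ u' = true)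
    (hAP2 : ∀ U ∈ F, ∀ u ∈ U, σ u = false →
      ∀ u', u' ∉ U → (u' = u + 1 ∨ u = u' + 1) → σ u' = false)
    (m2 m1 p m3 : ZMod n)
    (hm1 : m1 = m2 + 1) (hp : p = m2 + 2) (hm3 : m3 = m2 + 3)
    (hσm2 : σ m2 = false) (hσm1 : σ m1 = false)
    (hσp : σ p = true) (hσm3 : σ m3 = false) :
    (¬ ∃ U ∈ F, m1 ∉ U ∧ ∀ x ∉ U, σ x = false → x = m1) ∧
    (¬ ∃ U ∈ F, ∃ W ∈ F, U ∩ W = ∅ ∧ m1 ∉ U ∪ W ∧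
        ∀ x ∉ U ∪ W, σ x = false → x = m1) := by
  have hp' : p = m1 + 1 := by rw [hp, hm1]; ring
  have hm3' : m3 = p + 1 := by rw [hm3, hp]; ring
  have key := fun {S : Set (ZMod n)} (hS : ∀ x ∈ S, ∃ X ∈ F, x ∈ X ∧ X ⊆ S) =>
    false_of_negative_outside_eq hAP1 hAP2 hS hm1 hp' hm3' hσm2 hσm1 hσp hσm3
  constructor
  · rintro ⟨U, hU, hm1U, houtside⟩
    exact key (fun x hx => ⟨U, hU, hx, subset_rfl⟩) hm1U houtside
  · rintro ⟨U, hU, W, hW, -, hm1UW, houtside⟩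
    refine key (fun x hx => ?_) hm1UW houtside
    rcases hx with hx | hx
    · exact ⟨U, hU, hx, Set.subset_union_left⟩
    · exact ⟨W, hW, hx, Set.subset_union_right⟩

/-- Let `(V, σ, F)` satisfy P0–P4, AP1 and AP2. If four consecutive
vertices `m2, m1, p, m3` on the circle have signs `−, −, +, −`, then `m1` is removable:
there is no `m1`-dangerous set and no `m1`-dangerous pair in `F`.
(`true` = `+`, `false` = `−`; the circle is `ZMod n`.) -/
theorem stmt_11 {n : ℕ} (hn : 4 ≤ n)
    (σ : ZMod n → Bool) (F : Set (Set (ZMod n)))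
    (hF : ∀ U ∈ F, U ≠ ∅ ∧ U ≠ Set.univ)
    (hP0 : ∀ U ∈ F, IsCircularInterval U)
    (hP1 : ∀ U ∈ F, ∀ W ∈ F, (U ∩ W).Nonempty → U ∪ W ≠ Set.univ →
      U ∩ W ∈ F ∧ U ∪ W ∈ F)
    (hP2 : ∀ U ∈ F, (∃ u ∈ U, σ u = true) ∧ (∃ v ∉ U, σ v = false))
    (hP3 : ∀ U ∈ F, ∀ W ∈ F, U ∩ W = ∅ → ∃ v ∉ U ∪ W, σ v = false)
    (hP4 : ∀ U ∈ F, ∀ W ∈ F, U ∪ W = Set.univ → ∃ u ∈ U ∩ W, σ u = true)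
    (hAP1 : ∀ U ∈ F, ∀ u ∈ U, σ u = true →
      ∀ u', u' ∉ U → (u' = u + 1 ∨ u = u' + 1) → σ u' = true)
    (hAP2 : ∀ U ∈ F, ∀ u ∈ U, σ u = false →
      ∀ u', u' ∉ U → (u' = u + 1 ∨ u = u' + 1) → σ u' = false)
    (m2 m1 p m3 : ZMod n)
    (hm1 : m1 = m2 + 1) (hp : p = m2 + 2) (hm3 : m3 = m2 + 3)
    (hσm2 : σ m2 = false) (hσm1 : σ m1 = false)
    (hσp : σ p = true) (hσm3 : σ m3 = false) :
    (¬ ∃ U ∈ F, m1 ∉ U ∧ ∀ x ∉ U, σ x = false → x = m1) ∧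
    (¬ ∃ U ∈ F, ∃ W ∈ F, U ∩ W = ∅ ∧ m1 ∉ U ∪ W ∧
        ∀ x ∉ U ∪ W, σ x = false → x = m1) :=
  stmt_11_general σ F hAP1 hAP2 m2 m1 p m3 hm1 hp hm3 hσm2 hσm1 hσp hσm3
end

section
/- Let (V, σ, F) satisfy P0–P4 and AP1 with four consecutive circle vertices m2, m1, p1, p2 signed −, −, +, +, and suppose neither {m1, p1} nor its complement belongs to F. Then at least one of m1, p1 is removable (admits no dangerous set and no dangerous pair). -/
/-!
Write `m2, m1, p1, p2 = a, a + 1, a + 2, a + 3` and suppose neither `m1` nor `p1` is removable.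
Treating a dangerous set as a dangerous pair with a trivial partner, `m1` has a dangerous pair
`(A, B)` and `p1` a dangerous pair `(U, W)`; AP1 and the hypotheses on `{m1, p1}` let us arrange
`m2 ∈ A ∩ U` and `p2 ∉ A ∪ U`. Two dual facts drive the contradiction. If `S, T ∈ F` (`T` possibly
empty) and `S ∪ T` contains `A ∪ B ∪ {m1}`, then `S ∪ T = V`, for otherwise P1–P3 give a negative
vertex outside it. If `S ∪ T = V` (`T` possibly `V`) and `S ∩ T ⊆ U ∩ W`, then P2/P4 give a
positive vertex of `S ∩ T`, which must be `p1`. The first fact for `U ∪ A` and `B` forces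
`p2 ∈ B`, and a vertex of `U ∩ B` outside `A` shows, since `U` and `A` are intervals avoiding
`p2`, that `A ⊆ U`. The first fact for `W ∪ B` and `A` then gives `A ∪ W ∪ B = V`, and the second
puts `p1` into `A`, which AP1 forbids.
-/

open Set

section Circle

variable {n : ℕ}

theorem ZMod.val_sub_eq_iff [NeZero n] {c x : ZMod n} {j : ℕ} (hj : j < n) :
    (c - x).val = j ↔ x = c - j := by
  constructor
  · intro h
    rw [← h, ZMod.natCast_zmod_val]
    ring
  · rintro rfl
    rw [sub_sub_cancel, ZMod.val_cast_of_lt hj]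

theorem IsCircularInterval.exists_Ico [NeZero n] {S : Set (ZMod n)} (hS : IsCircularInterval S)
    {c : ZMod n} (hc : c ∉ S) :
    ∃ lo hi : ℕ, ∀ x, x ∈ S ↔ lo ≤ (c - x).val ∧ (c - x).val < hi := by
  obtain ⟨a, _ | j, rfl⟩ := hS
  · exact ⟨0, 0, by simp⟩
  set lo := (c - (a + j)).val
  have hlo : lo < n := ZMod.val_lt _
  have key : ∀ i ≤ j, c - (a + i) = ((lo + (j - i) : ℕ) : ZMod n) := by
    intro i hi
    rw [Nat.cast_add, Nat.cast_sub hi, ZMod.natCast_zmod_val]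
    ring
  have hlt : lo + j < n := by
    -- otherwise the interval wraps around through `c`
    by_contra hge
    refine hc ⟨j - (n - lo), by omega, ?_⟩
    rw [← sub_eq_zero, key _ (by omega), show lo + (j - (j - (n - lo))) = n by omega,
      ZMod.natCast_self]
  refine ⟨lo, lo + j + 1, fun x => ⟨?_, ?_⟩⟩
  · rintro ⟨i, hi, rfl⟩
    rw [key i (by omega), ZMod.val_cast_of_lt (by omega)]
    omega
  · rintro ⟨h1, h2⟩
    refine ⟨j - ((c - x).val - lo), by omega, ?_⟩
    rw [← sub_right_inj (a := c), key _ (by omega),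
      show lo + (j - (j - ((c - x).val - lo))) = (c - x).val by omega, ZMod.natCast_zmod_val]

theorem IsCircularInterval.subset_pair_or_mem (hn : 4 ≤ n) {S : Set (ZMod n)}
    (hS : IsCircularInterval S) {a : ZMod n} (h3 : a + 3 ∉ S) (h2 : a + 2 ∈ S) :
    S ⊆ {a + 1, a + 2} ∨ a ∈ S := by
  have : NeZero n := ⟨by omega⟩
  obtain ⟨lo, hi, hS⟩ := hS.exists_Ico h3
  rw [hS, sub_self, ZMod.val_zero] at h3
  rw [hS, (ZMod.val_sub_eq_iff (by omega)).2 (by push_cast; ring : a + 2 = a + 3 - (1 : ℕ))]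
    at h2
  by_cases hhi : 3 < hi
  · right
    rw [hS, (ZMod.val_sub_eq_iff (by omega)).2 (by push_cast; ring : a = a + 3 - (3 : ℕ))]
    omega
  · left
    intro x hx
    rw [hS] at hx
    rw [mem_insert_iff, mem_singleton_iff]
    obtain hv | hv : (a + 3 - x).val = 1 ∨ (a + 3 - x).val = 2 := by omega
    all_goals rw [ZMod.val_sub_eq_iff (by omega)] at hv; push_cast at hv
    · exact Or.inr (by linear_combination hv)
    · exact Or.inl (by linear_combination hv)

theorem IsCircularInterval.eq_compl_pair (hn : 4 ≤ n) {S : Set (ZMod n)}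
    (hS : IsCircularInterval S) {a : ZMod n} (ha : a ∈ S) (h1 : a + 1 ∉ S) (h2 : a + 2 ∉ S)
    (h3 : a + 3 ∈ S) : S = {a + 1, a + 2}ᶜ := by
  have : NeZero n := ⟨by omega⟩
  obtain ⟨lo, hi, hS⟩ := hS.exists_Ico h2
  rw [hS, (ZMod.val_sub_eq_iff (by omega)).2 (by push_cast; ring : a = a + 2 - (2 : ℕ))] at ha
  rw [hS, (ZMod.val_sub_eq_iff (by omega)).2 (by push_cast; ring : a + 1 = a + 2 - (1 : ℕ))]
    at h1
  rw [hS, (ZMod.val_sub_eq_iff (by omega)).2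
    (by rw [Nat.cast_sub (by omega), ZMod.natCast_self]; push_cast; ring :
      a + 3 = a + 2 - (n - 1 : ℕ))] at h3
  ext x
  have hx := ZMod.val_lt (a + 2 - x)
  have e1 : x = a + 1 ↔ (a + 2 - x).val = 1 := by
    rw [ZMod.val_sub_eq_iff (by omega)]
    constructor <;> rintro rfl <;> push_cast <;> ring
  have e0 : x = a + 2 ↔ (a + 2 - x).val = 0 := by rw [ZMod.val_eq_zero, sub_eq_zero, eq_comm]
  rw [hS, mem_compl_iff, mem_insert_iff, mem_singleton_iff, e1, e0]
  omega

theorem IsCircularInterval.subset_of_mem_of_not_mem (hn : 4 ≤ n) {A U : Set (ZMod n)}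
    (hA : IsCircularInterval A) (hU : IsCircularInterval U) {a w : ZMod n}
    (hA3 : a + 3 ∉ A) (haA : a ∈ A) (h1A : a + 1 ∉ A) (hU3 : a + 3 ∉ U) (h2U : a + 2 ∈ U)
    (hwU : w ∈ U) (hwA : w ∉ A) (hw1 : w ≠ a + 1) (hw2 : w ≠ a + 2) : A ⊆ U := by
  have : NeZero n := ⟨by omega⟩
  have hw : 3 ≤ (a + 3 - w).val := by
    by_contra! h
    obtain hv | hv | hv : (a + 3 - w).val = 0 ∨ (a + 3 - w).val = 1 ∨ (a + 3 - w).val = 2 := by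
      omega
    · rw [ZMod.val_eq_zero, sub_eq_zero] at hv
      exact hU3 (hv ▸ hwU)
    all_goals rw [ZMod.val_sub_eq_iff (by omega)] at hv; push_cast at hv
    · exact hw2 (by linear_combination hv)
    · exact hw1 (by linear_combination hv)
  obtain ⟨loA, hiA, hA⟩ := hA.exists_Ico hA3
  obtain ⟨loU, hiU, hU⟩ := hU.exists_Ico hU3
  rw [hA, (ZMod.val_sub_eq_iff (by omega)).2 (by push_cast; ring : a = a + 3 - (3 : ℕ))] at haA
  rw [hA, (ZMod.val_sub_eq_iff (by omega)).2 (by push_cast; ring : a + 1 = a + 3 - (2 : ℕ))]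
    at h1A
  rw [hU, (ZMod.val_sub_eq_iff (by omega)).2 (by push_cast; ring : a + 2 = a + 3 - (1 : ℕ))]
    at h2U
  rw [hA] at hwA
  rw [hU] at hwU
  intro z hz
  rw [hA] at hz
  rw [hU]
  omega

end Circle

section Dangerous

variable {V : Type*} {σ : V → Bool} {F : Set (Set V)}

def IsNegRemovable (σ : V → Bool) (F : Set (Set V)) (u : V) : Prop :=
  (¬ ∃ U ∈ F, u ∉ U ∧ ∀ x ∉ U, σ x = false → x = u) ∧
    (¬ ∃ U ∈ F, ∃ W ∈ F, U ∩ W = ∅ ∧ u ∉ U ∪ W ∧ ∀ x ∉ U ∪ W, σ x = false → x = u)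

def IsPosRemovable (σ : V → Bool) (F : Set (Set V)) (v : V) : Prop :=
  (¬ ∃ U ∈ F, v ∈ U ∧ ∀ x ∈ U, σ x = true → x = v) ∧
    (¬ ∃ U ∈ F, ∃ W ∈ F, U ∪ W = univ ∧ v ∈ U ∩ W ∧ ∀ x ∈ U ∩ W, σ x = true → x = v)

/-- A `u`-dangerous set `A` is encoded as the pair `(A, ∅)`. -/
structure IsNegDangerous (σ : V → Bool) (F : Set (Set V)) (u : V) (A B : Set V) : Prop where
  left_mem : A ∈ F
  right_mem : B ∈ insert ∅ F
  inter_eq : A ∩ B = ∅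
  not_mem : u ∉ A ∪ B
  eq_of_not_mem : ∀ x ∉ A ∪ B, σ x = false → x = u

/-- A `v`-dangerous set `U` is encoded as the pair `(U, univ)`. -/
structure IsPosDangerous (σ : V → Bool) (F : Set (Set V)) (v : V) (U W : Set V) : Prop where
  left_mem : U ∈ F
  right_mem : W ∈ insert univ F
  union_eq : U ∪ W = univ
  mem : v ∈ U ∩ W
  eq_of_mem : ∀ x ∈ U ∩ W, σ x = true → x = v

theorem IsNegDangerous.exists_of_not_isNegRemovable {u : V} (h : ¬ IsNegRemovable σ F u) :
    ∃ A B, IsNegDangerous σ F u A B := by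
  by_contra! hne
  refine h ⟨?_, ?_⟩
  · rintro ⟨A, hA, hu, hneg⟩
    exact hne A ∅ ⟨hA, mem_insert _ _, inter_empty A, by simpa, by simpa⟩
  · rintro ⟨A, hA, B, hB, hAB, hu, hneg⟩
    exact hne A B ⟨hA, mem_insert_of_mem _ hB, hAB, hu, hneg⟩

theorem IsPosDangerous.exists_of_not_isPosRemovable {v : V} (h : ¬ IsPosRemovable σ F v) :
    ∃ U W, IsPosDangerous σ F v U W := by
  by_contra! hne
  refine h ⟨?_, ?_⟩
  · rintro ⟨U, hU, hv, hpos⟩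
    exact hne U univ ⟨hU, mem_insert _ _, union_univ U, by simpa, by simpa⟩
  · rintro ⟨U, hU, W, hW, hUW, hv, hpos⟩
    exact hne U W ⟨hU, mem_insert_of_mem _ hW, hUW, hv, hpos⟩

theorem IsNegDangerous.exists_mem_left {u x : V} {A B : Set V} (h : IsNegDangerous σ F u A B)
    (hx : x ∈ A ∪ B) : ∃ A' B', IsNegDangerous σ F u A' B' ∧ x ∈ A' := by
  rcases hx with hx | hx
  · exact ⟨A, B, h, hx⟩
  · have hB : B ∈ F := h.right_mem.resolve_left (nonempty_of_mem hx).ne_empty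
    exact ⟨B, A, ⟨hB, mem_insert_of_mem _ h.left_mem, by rw [inter_comm, h.inter_eq],
      by rw [union_comm]; exact h.not_mem, by rw [union_comm]; exact h.eq_of_not_mem⟩, hx⟩

theorem IsPosDangerous.exists_not_mem_left {v x : V} {U W : Set V} (h : IsPosDangerous σ F v U W)
    (hx : x ∉ U ∩ W) : ∃ U' W', IsPosDangerous σ F v U' W' ∧ x ∉ U' := by
  by_cases hxU : x ∈ U
  · have hxW : x ∉ W := fun hxW => hx ⟨hxU, hxW⟩
    have hW : W ∈ F := h.right_mem.resolve_left ((ne_univ_iff_exists_notMem W).2 ⟨x, hxW⟩)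
    exact ⟨W, U, ⟨hW, mem_insert_of_mem _ h.left_mem, by rw [union_comm, h.union_eq],
      by rw [inter_comm]; exact h.mem, by rw [inter_comm]; exact h.eq_of_mem⟩, hxW⟩
  · exact ⟨U, W, h, hxU⟩

theorem exists_neg_not_mem_union
    (hP1 : ∀ U ∈ F, ∀ W ∈ F, (U ∩ W).Nonempty → U ∪ W ≠ univ → U ∩ W ∈ F ∧ U ∪ W ∈ F)
    (hP2 : ∀ U ∈ F, (∃ u ∈ U, σ u = true) ∧ (∃ v ∉ U, σ v = false))
    (hP3 : ∀ U ∈ F, ∀ W ∈ F, U ∩ W = ∅ → ∃ v ∉ U ∪ W, σ v = false)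
    {S T : Set V} (hS : S ∈ F) (hT : T ∈ insert ∅ F) (hST : S ∪ T ≠ univ) :
    ∃ v ∉ S ∪ T, σ v = false := by
  rcases hT with rfl | hT
  · simpa using (hP2 S hS).2
  · rcases (S ∩ T).eq_empty_or_nonempty with h | h
    · exact hP3 S hS T hT h
    · exact (hP2 _ (hP1 S hS T hT h hST).2).2

theorem exists_pos_mem_inter
    (hP2 : ∀ U ∈ F, (∃ u ∈ U, σ u = true) ∧ (∃ v ∉ U, σ v = false))
    (hP4 : ∀ U ∈ F, ∀ W ∈ F, U ∪ W = univ → ∃ u ∈ U ∩ W, σ u = true)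
    {S T : Set V} (hS : S ∈ F) (hT : T ∈ insert univ F) (hST : S ∪ T = univ) :
    ∃ u ∈ S ∩ T, σ u = true := by
  rcases hT with rfl | hT
  · simpa using (hP2 S hS).1
  · exact hP4 S hS T hT hST

theorem union_mem_insert_univ
    (hP1 : ∀ U ∈ F, ∀ W ∈ F, (U ∩ W).Nonempty → U ∪ W ≠ univ → U ∩ W ∈ F ∧ U ∪ W ∈ F)
    {S T : Set V} (hS : S ∈ insert univ F) (hT : T ∈ F) (hST : (S ∩ T).Nonempty) :
    S ∪ T ∈ insert univ F := by
  rcases hS with rfl | hS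
  · exact Or.inl (univ_union T)
  · by_cases h : S ∪ T = univ
    · exact Or.inl h
    · exact Or.inr (hP1 S hS T hT hST h).2

theorem IsNegDangerous.union_eq_univ
    (hP1 : ∀ U ∈ F, ∀ W ∈ F, (U ∩ W).Nonempty → U ∪ W ≠ univ → U ∩ W ∈ F ∧ U ∪ W ∈ F)
    (hP2 : ∀ U ∈ F, (∃ u ∈ U, σ u = true) ∧ (∃ v ∉ U, σ v = false))
    (hP3 : ∀ U ∈ F, ∀ W ∈ F, U ∩ W = ∅ → ∃ v ∉ U ∪ W, σ v = false)
    {u : V} {A B S T : Set V} (h : IsNegDangerous σ F u A B) (hS : S ∈ F)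
    (hT : T ∈ insert ∅ F) (hu : u ∈ S ∪ T) (hAB : A ∪ B ⊆ S ∪ T) : S ∪ T = univ := by
  by_contra hST
  obtain ⟨v, hv, hσv⟩ := exists_neg_not_mem_union hP1 hP2 hP3 hS hT hST
  exact hv (h.eq_of_not_mem v (fun hvAB => hv (hAB hvAB)) hσv ▸ hu)

theorem IsPosDangerous.mem_inter
    (hP2 : ∀ U ∈ F, (∃ u ∈ U, σ u = true) ∧ (∃ v ∉ U, σ v = false))
    (hP4 : ∀ U ∈ F, ∀ W ∈ F, U ∪ W = univ → ∃ u ∈ U ∩ W, σ u = true)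
    {v : V} {U W S T : Set V} (h : IsPosDangerous σ F v U W) (hS : S ∈ F)
    (hT : T ∈ insert univ F) (hST : S ∪ T = univ) (hsub : S ∩ T ⊆ U ∩ W) : v ∈ S ∩ T := by
  obtain ⟨x, hx, hσx⟩ := exists_pos_mem_inter hP2 hP4 hS hT hST
  exact h.eq_of_mem x (hsub hx) hσx ▸ hx

end Dangerous

section Configuration

variable {n : ℕ} {σ : ZMod n → Bool} {F : Set (Set (ZMod n))}

theorem mem_of_succ_mem
    (hAP1 : ∀ U ∈ F, ∀ u ∈ U, σ u = true → ∀ u', u' ∉ U → (u' = u + 1 ∨ u = u' + 1) → σ u' = true)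
    {S : Set (ZMod n)} {u v : ZMod n} (hS : S ∈ F) (hv : v ∈ S) (hσv : σ v = true)
    (hσu : σ u = false) (huv : v = u + 1) : u ∈ S := by
  by_contra hu
  simpa [hσu] using hAP1 S hS v hv hσv u hu (Or.inr huv)

theorem IsNegDangerous.succ_not_mem
    (hAP1 : ∀ U ∈ F, ∀ u ∈ U, σ u = true → ∀ u', u' ∉ U → (u' = u + 1 ∨ u = u' + 1) → σ u' = true)
    {u v : ZMod n} {A B : Set (ZMod n)} (h : IsNegDangerous σ F u A B) (hσu : σ u = false)
    (hσv : σ v = true) (huv : v = u + 1) : v ∉ A ∪ B := by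
  rintro (hv | hv)
  · exact h.not_mem (Or.inl (mem_of_succ_mem hAP1 h.left_mem hv hσv hσu huv))
  · rcases h.right_mem with rfl | hB
    · exact hv
    · exact h.not_mem (Or.inr (mem_of_succ_mem hAP1 hB hv hσv hσu huv))

theorem IsPosDangerous.mem_inter_of_succ
    (hAP1 : ∀ U ∈ F, ∀ u ∈ U, σ u = true → ∀ u', u' ∉ U → (u' = u + 1 ∨ u = u' + 1) → σ u' = true)
    {u v : ZMod n} {U W : Set (ZMod n)} (h : IsPosDangerous σ F v U W) (hσu : σ u = false)
    (hσv : σ v = true) (huv : v = u + 1) : u ∈ U ∩ W := by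
  refine ⟨mem_of_succ_mem hAP1 h.left_mem h.mem.1 hσv hσu huv, ?_⟩
  rcases h.right_mem with rfl | hW
  · trivial
  · exact mem_of_succ_mem hAP1 hW h.mem.2 hσv hσu huv

theorem IsNegDangerous.exists_normalized (hn : 4 ≤ n) (hP0 : ∀ U ∈ F, IsCircularInterval U)
    (hAP1 : ∀ U ∈ F, ∀ u ∈ U, σ u = true → ∀ u', u' ∉ U → (u' = u + 1 ∨ u = u' + 1) → σ u' = true)
    {a : ZMod n} (hσ0 : σ a = false) (hσ1 : σ (a + 1) = false) (hσ2 : σ (a + 2) = true)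
    (hpairc : ({a + 1, a + 2} : Set (ZMod n))ᶜ ∉ F) {A B : Set (ZMod n)}
    (h : IsNegDangerous σ F (a + 1) A B) :
    ∃ A B, IsNegDangerous σ F (a + 1) A B ∧ a ∈ A ∧ a + 2 ∉ A ∪ B ∧ a + 3 ∉ A := by
  have : Fact (1 < n) := ⟨by omega⟩
  have ha : a ∈ A ∪ B := by
    by_contra ha
    exact one_ne_zero (by linear_combination -h.eq_of_not_mem a ha hσ0 : (1 : ZMod n) = 0)
  obtain ⟨A, B, h, ha⟩ := h.exists_mem_left ha
  have h2 : a + 2 ∉ A ∪ B := h.succ_not_mem hAP1 hσ1 hσ2 (by ring)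
  refine ⟨A, B, h, ha, h2, fun h3 => hpairc ?_⟩
  rw [← (hP0 A h.left_mem).eq_compl_pair hn ha (fun h1 => h.not_mem (Or.inl h1))
    (fun h2A => h2 (Or.inl h2A)) h3]
  exact h.left_mem

theorem IsPosDangerous.exists_normalized (hn : 4 ≤ n) (hP0 : ∀ U ∈ F, IsCircularInterval U)
    (hAP1 : ∀ U ∈ F, ∀ u ∈ U, σ u = true → ∀ u', u' ∉ U → (u' = u + 1 ∨ u = u' + 1) → σ u' = true)
    {a : ZMod n} (hσ1 : σ (a + 1) = false) (hσ2 : σ (a + 2) = true) (hσ3 : σ (a + 3) = true)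
    (hpair : ({a + 1, a + 2} : Set (ZMod n)) ∉ F) {U W : Set (ZMod n)}
    (h : IsPosDangerous σ F (a + 2) U W) :
    ∃ U W, IsPosDangerous σ F (a + 2) U W ∧ a + 1 ∈ U ∩ W ∧ a ∈ U ∧ a + 3 ∉ U := by
  have : Fact (1 < n) := ⟨by omega⟩
  have h3 : a + 3 ∉ U ∩ W := fun h3 =>
    one_ne_zero (by linear_combination h.eq_of_mem _ h3 hσ3 : (1 : ZMod n) = 0)
  obtain ⟨U, W, h, h3⟩ := h.exists_not_mem_left h3
  have h1 : a + 1 ∈ U ∩ W := h.mem_inter_of_succ hAP1 hσ1 hσ2 (by ring)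
  refine ⟨U, W, h, h1, ?_, h3⟩
  refine ((hP0 U h.left_mem).subset_pair_or_mem hn h3 h.mem.1).resolve_left fun hsub => hpair ?_
  rw [← hsub.antisymm (insert_subset h1.1 (singleton_subset_iff.2 h.mem.1))]
  exact h.left_mem

theorem false_of_isNegDangerous_of_isPosDangerous (hn : 4 ≤ n)
    (hP0 : ∀ U ∈ F, IsCircularInterval U)
    (hP1 : ∀ U ∈ F, ∀ W ∈ F, (U ∩ W).Nonempty → U ∪ W ≠ univ → U ∩ W ∈ F ∧ U ∪ W ∈ F)
    (hP2 : ∀ U ∈ F, (∃ u ∈ U, σ u = true) ∧ (∃ v ∉ U, σ v = false))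
    (hP3 : ∀ U ∈ F, ∀ W ∈ F, U ∩ W = ∅ → ∃ v ∉ U ∪ W, σ v = false)
    (hP4 : ∀ U ∈ F, ∀ W ∈ F, U ∪ W = univ → ∃ u ∈ U ∩ W, σ u = true)
    {a : ZMod n} {A B U W : Set (ZMod n)}
    (hA : IsNegDangerous σ F (a + 1) A B) (haA : a ∈ A) (h2AB : a + 2 ∉ A ∪ B) (h3A : a + 3 ∉ A)
    (hU : IsPosDangerous σ F (a + 2) U W) (h1UW : a + 1 ∈ U ∩ W) (haU : a ∈ U)
    (h3U : a + 3 ∉ U) : False := by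
  have hAB := disjoint_left.1 (disjoint_iff_inter_eq_empty.2 hA.inter_eq)
  have h3W : a + 3 ∈ W := (hU.union_eq ▸ mem_univ (a + 3)).resolve_left h3U
  have h3UA : a + 3 ∉ U ∪ A := fun h => h.elim h3U h3A
  have hUA : U ∪ A ∈ F := (hP1 U hU.left_mem A hA.left_mem ⟨a, haU, haA⟩
    ((ne_univ_iff_exists_notMem _).2 ⟨a + 3, h3UA⟩)).2
  have hUAB : U ∪ A ∪ B = univ := hA.union_eq_univ hP1 hP2 hP3 hUA hA.right_mem
    (Or.inl (Or.inl h1UW.1)) (union_subset_union_left B subset_union_right)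
  have h3B : a + 3 ∈ B := (hUAB ▸ mem_univ (a + 3)).resolve_left h3UA
  have hB : B ∈ F := hA.right_mem.resolve_left (nonempty_of_mem h3B).ne_empty
  obtain ⟨w, hwUA, hwB⟩ : ((U ∪ A) ∩ B).Nonempty := by
    rw [nonempty_iff_ne_empty]
    intro h
    obtain ⟨v, hv, -⟩ := hP3 _ hUA B hB h
    exact hv (hUAB ▸ mem_univ v)
  have hwA : w ∉ A := fun hwA => hAB hwA hwB
  have hAU : A ⊆ U := (hP0 A hA.left_mem).subset_of_mem_of_not_mem hn (hP0 U hU.left_mem) h3A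
    haA (fun h => hA.not_mem (Or.inl h)) h3U hU.mem.1 (hwUA.resolve_right hwA) hwA
    (fun h => hA.not_mem (Or.inr (h ▸ hwB))) (fun h => h2AB (Or.inr (h ▸ hwB)))
  have hWB := union_mem_insert_univ hP1 hU.right_mem hB ⟨a + 3, h3W, h3B⟩
  have hAWB : A ∪ (W ∪ B) = univ := by
    rcases hWB with hWB | hWB
    · rw [hWB, union_univ]
    · rw [union_comm]
      exact hA.union_eq_univ hP1 hP2 hP3 hWB (mem_insert_of_mem _ hA.left_mem)
        (Or.inl (Or.inl h1UW.2))
        (union_subset subset_union_right (subset_union_right.trans subset_union_left))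
  have h2A := hU.mem_inter hP2 hP4 hA.left_mem hWB hAWB fun x ⟨hxA, hxWB⟩ =>
    ⟨hAU hxA, hxWB.resolve_right (hAB hxA)⟩
  exact h2AB (Or.inl h2A.1)

end Configuration

theorem stmt_12_general {n : ℕ} (hn : 4 ≤ n)
    (σ : ZMod n → Bool) (F : Set (Set (ZMod n)))
    (hP0 : ∀ U ∈ F, IsCircularInterval U)
    (hP1 : ∀ U ∈ F, ∀ W ∈ F, (U ∩ W).Nonempty → U ∪ W ≠ Set.univ →
      U ∩ W ∈ F ∧ U ∪ W ∈ F)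
    (hP2 : ∀ U ∈ F, (∃ u ∈ U, σ u = true) ∧ (∃ v ∉ U, σ v = false))
    (hP3 : ∀ U ∈ F, ∀ W ∈ F, U ∩ W = ∅ → ∃ v ∉ U ∪ W, σ v = false)
    (hP4 : ∀ U ∈ F, ∀ W ∈ F, U ∪ W = Set.univ → ∃ u ∈ U ∩ W, σ u = true)
    (hAP1 : ∀ U ∈ F, ∀ u ∈ U, σ u = true →
      ∀ u', u' ∉ U → (u' = u + 1 ∨ u = u' + 1) → σ u' = true)
    (m2 m1 p1 p2 : ZMod n)
    (hm1 : m1 = m2 + 1) (hp1 : p1 = m2 + 2) (hp2 : p2 = m2 + 3)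
    (hσm2 : σ m2 = false) (hσm1 : σ m1 = false)
    (hσp1 : σ p1 = true) (hσp2 : σ p2 = true)
    (hpair : ({m1, p1} : Set (ZMod n)) ∉ F)
    (hpairc : (({m1, p1} : Set (ZMod n))ᶜ) ∉ F) :
    ((¬ ∃ U ∈ F, m1 ∉ U ∧ ∀ x ∉ U, σ x = false → x = m1) ∧
     (¬ ∃ U ∈ F, ∃ W ∈ F, U ∩ W = ∅ ∧ m1 ∉ U ∪ W ∧
        ∀ x ∉ U ∪ W, σ x = false → x = m1)) ∨
    ((¬ ∃ U ∈ F, p1 ∈ U ∧ ∀ x ∈ U, σ x = true → x = p1) ∧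
     (¬ ∃ U ∈ F, ∃ W ∈ F, U ∪ W = Set.univ ∧ p1 ∈ U ∩ W ∧
        ∀ x ∈ U ∩ W, σ x = true → x = p1)) := by
  subst hm1 hp1 hp2
  by_contra h
  obtain ⟨hm, hp⟩ := not_or.1 h
  obtain ⟨A, B, hAB⟩ := IsNegDangerous.exists_of_not_isNegRemovable hm
  obtain ⟨U, W, hUW⟩ := IsPosDangerous.exists_of_not_isPosRemovable hp
  obtain ⟨A, B, hA, haA, h2AB, h3A⟩ := hAB.exists_normalized hn hP0 hAP1 hσm2 hσm1 hσp1 hpairc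
  obtain ⟨U, W, hU, h1UW, haU, h3U⟩ := hUW.exists_normalized hn hP0 hAP1 hσm1 hσp1 hσp2 hpair
  exact false_of_isNegDangerous_of_isPosDangerous hn hP0 hP1 hP2 hP3 hP4 hA haA h2AB h3A hU h1UW
    haU h3U

/-- Let `(V, σ, F)` satisfy P0–P4 and AP1, with four consecutive circle
vertices `m2, m1, p1, p2` signed `−, −, +, +`, and suppose neither `{m1, p1}` nor its
complement belongs to `F`. Then at least one of `m1`, `p1` is removable: it admits no
dangerous set and no dangerous pair. (`true` = `+`, `false` = `−`; the circle is `ZMod n`.) -/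
theorem stmt_12 {n : ℕ} (hn : 4 ≤ n)
    (σ : ZMod n → Bool) (F : Set (Set (ZMod n)))
    (hF : ∀ U ∈ F, U ≠ ∅ ∧ U ≠ Set.univ)
    (hP0 : ∀ U ∈ F, IsCircularInterval U)
    (hP1 : ∀ U ∈ F, ∀ W ∈ F, (U ∩ W).Nonempty → U ∪ W ≠ Set.univ →
      U ∩ W ∈ F ∧ U ∪ W ∈ F)
    (hP2 : ∀ U ∈ F, (∃ u ∈ U, σ u = true) ∧ (∃ v ∉ U, σ v = false))
    (hP3 : ∀ U ∈ F, ∀ W ∈ F, U ∩ W = ∅ → ∃ v ∉ U ∪ W, σ v = false)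
    (hP4 : ∀ U ∈ F, ∀ W ∈ F, U ∪ W = Set.univ → ∃ u ∈ U ∩ W, σ u = true)
    (hAP1 : ∀ U ∈ F, ∀ u ∈ U, σ u = true →
      ∀ u', u' ∉ U → (u' = u + 1 ∨ u = u' + 1) → σ u' = true)
    (m2 m1 p1 p2 : ZMod n)
    (hm1 : m1 = m2 + 1) (hp1 : p1 = m2 + 2) (hp2 : p2 = m2 + 3)
    (hσm2 : σ m2 = false) (hσm1 : σ m1 = false)
    (hσp1 : σ p1 = true) (hσp2 : σ p2 = true)
    (hpair : ({m1, p1} : Set (ZMod n)) ∉ F)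
    (hpairc : (({m1, p1} : Set (ZMod n))ᶜ) ∉ F) :
    ((¬ ∃ U ∈ F, m1 ∉ U ∧ ∀ x ∉ U, σ x = false → x = m1) ∧
     (¬ ∃ U ∈ F, ∃ W ∈ F, U ∩ W = ∅ ∧ m1 ∉ U ∪ W ∧
        ∀ x ∉ U ∪ W, σ x = false → x = m1)) ∨
    ((¬ ∃ U ∈ F, p1 ∈ U ∧ ∀ x ∈ U, σ x = true → x = p1) ∧
     (¬ ∃ U ∈ F, ∃ W ∈ F, U ∪ W = Set.univ ∧ p1 ∈ U ∩ W ∧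
        ∀ x ∈ U ∩ W, σ x = true → x = p1)) :=
  stmt_12_general hn σ F hP0 hP1 hP2 hP3 hP4 hAP1 m2 m1 p1 p2 hm1 hp1 hp2 hσm2 hσm1 hσp1 hσp2 hpair
    hpairc
end

section
/- Let (V, σ, F) satisfy P0–P4 and AP1 with four consecutive circle vertices m2, m1, p1, p2 signed −, −, +, +. Then there do not simultaneously exist an m1-dangerous pair and a p1-dangerous pair in F. -/
open Set

section Families

variable {V : Type*}

-- Axioms (P1)–(P4) for a family `F` of vertex sets signed by `σ` (`true` = `+`).
def IsCrossingClosed (F : Set (Set V)) : Prop :=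
  ∀ U ∈ F, ∀ W ∈ F, (U ∩ W).Nonempty → U ∪ W ≠ univ → U ∩ W ∈ F ∧ U ∪ W ∈ F

def SeparatesSigns (σ : V → Bool) (F : Set (Set V)) : Prop :=
  ∀ U ∈ F, (∃ u ∈ U, σ u = true) ∧ (∃ v ∉ U, σ v = false)

def DisjointPairsMissNegative (σ : V → Bool) (F : Set (Set V)) : Prop :=
  ∀ U ∈ F, ∀ W ∈ F, U ∩ W = ∅ → ∃ v ∉ U ∪ W, σ v = false

def CoveringPairsSharePositive (σ : V → Bool) (F : Set (Set V)) : Prop :=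
  ∀ U ∈ F, ∀ W ∈ F, U ∪ W = univ → ∃ u ∈ U ∩ W, σ u = true

structure IsNegDangerousPair (σ : V → Bool) (F : Set (Set V)) (m : V) (W W' : Set V) :
    Prop where
  left_mem : W ∈ F
  right_mem : W' ∈ F
  inter_eq_empty : W ∩ W' = ∅
  notMem_union : m ∉ W ∪ W'
  eq_of_notMem_union : ∀ x ∉ W ∪ W', σ x = false → x = m

structure IsPosDangerousPair (σ : V → Bool) (F : Set (Set V)) (p : V) (U U' : Set V) :
    Prop where
  left_mem : U ∈ F
  right_mem : U' ∈ F
  union_eq_univ : U ∪ U' = univ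
  mem_inter : p ∈ U ∩ U'
  eq_of_mem_inter : ∀ x ∈ U ∩ U', σ x = true → x = p

variable {σ : V → Bool} {F : Set (Set V)} {m p : V} {U U' W W' : Set V}

theorem IsNegDangerousPair.symm (h : IsNegDangerousPair σ F m W W') :
    IsNegDangerousPair σ F m W' W where
  left_mem := h.right_mem
  right_mem := h.left_mem
  inter_eq_empty := inter_comm W W' ▸ h.inter_eq_empty
  notMem_union := union_comm W W' ▸ h.notMem_union
  eq_of_notMem_union := union_comm W W' ▸ h.eq_of_notMem_union

theorem IsPosDangerousPair.symm (h : IsPosDangerousPair σ F p U U') :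
    IsPosDangerousPair σ F p U' U where
  left_mem := h.right_mem
  right_mem := h.left_mem
  union_eq_univ := union_comm U U' ▸ h.union_eq_univ
  mem_inter := inter_comm U U' ▸ h.mem_inter
  eq_of_mem_inter := inter_comm U U' ▸ h.eq_of_mem_inter

theorem SeparatesSigns.ne_univ (hF : SeparatesSigns σ F) (hU : U ∈ F) : U ≠ univ := by
  obtain ⟨-, v, hv, -⟩ := hF U hU
  exact ne_univ_iff_exists_notMem U |>.mpr ⟨v, hv⟩

theorem IsPosDangerousPair.union_ne_univ (hP1 : IsCrossingClosed F) (hP2 : SeparatesSigns σ F)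
    (hP4 : CoveringPairsSharePositive σ F) (hU : IsPosDangerousPair σ F p U U')
    (hW : IsNegDangerousPair σ F m W W') (hpW : p ∉ W) (hpW' : p ∉ W') : W ∪ U ≠ univ := by
  intro hWU
  have hWU' : W ∪ U' ≠ univ := by
    intro hWU'
    obtain ⟨⟨x, hxW', hx⟩, -⟩ := hP2 W' hW.right_mem
    have hxW : x ∉ W := fun hxW => (hW.inter_eq_empty ▸ ⟨hxW, hxW'⟩ : x ∈ (∅ : Set V))
    have hxU : x ∈ U ∩ U' :=
      ⟨(hWU ▸ mem_univ x).resolve_left hxW, (hWU' ▸ mem_univ x).resolve_left hxW⟩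
    exact hpW' (hU.eq_of_mem_inter x hxU hx ▸ hxW')
  have hWU'_eq : W ∩ U' = ∅ := by
    by_contra hne
    obtain ⟨hY, -⟩ := hP1 W hW.left_mem U' hU.right_mem (nonempty_iff_ne_empty.mpr hne) hWU'
    have hYU : W ∩ U' ∪ U = univ := by
      have := hU.union_eq_univ
      simp only [eq_univ_iff_forall, mem_union, mem_inter_iff] at hWU this ⊢
      grind
    obtain ⟨u, ⟨⟨huW, huU'⟩, huU⟩, hu⟩ := hP4 _ hY U hU.left_mem hYU
    exact hpW (hU.eq_of_mem_inter u ⟨huU, huU'⟩ hu ▸ huW)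
  apply hP2.ne_univ hU.left_mem
  have := hU.union_eq_univ
  simp only [eq_univ_iff_forall, eq_empty_iff_forall_notMem, mem_union, mem_inter_iff]
    at hWU this hWU'_eq ⊢
  grind

theorem IsNegDangerousPair.right_inter_nonempty_of_left (hP1 : IsCrossingClosed F)
    (hP3 : DisjointPairsMissNegative σ F) (hW : IsNegDangerousPair σ F m W W') (hU : U ∈ F)
    (hmU : m ∈ U) (hWU : W ∪ U ≠ univ) (hne : (W ∩ U).Nonempty) : (W' ∩ U).Nonempty := by
  by_contra hempty
  rw [not_nonempty_iff_eq_empty] at hempty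
  obtain ⟨-, hY⟩ := hP1 W hW.left_mem U hU hne hWU
  have hYW' : (W ∪ U) ∩ W' = ∅ := by
    rw [union_inter_distrib_right, hW.inter_eq_empty, inter_comm, hempty, union_empty]
  obtain ⟨v, hv, hvneg⟩ := hP3 _ hY W' hW.right_mem hYW'
  have hvm : v = m := hW.eq_of_notMem_union v (fun h => hv (by grind)) hvneg
  exact hv (Or.inl (Or.inr (hvm ▸ hmU)))

theorem IsNegDangerousPair.inter_nonempty_or (hP2 : SeparatesSigns σ F)
    (hW : IsNegDangerousPair σ F m W W') (hU' : U' ∈ F) (hUU' : U ∪ U' = univ) (hmU' : m ∈ U') :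
    (W ∩ U).Nonempty ∨ (W' ∩ U).Nonempty := by
  obtain ⟨-, v, hvU', hv⟩ := hP2 U' hU'
  have hvU : v ∈ U := (hUU' ▸ mem_univ v).resolve_right hvU'
  have hvW : v ∈ W ∪ W' := by
    by_contra h
    exact hvU' (hW.eq_of_notMem_union v h hv ▸ hmU')
  exact hvW.imp (fun h => ⟨v, h, hvU⟩) (fun h => ⟨v, h, hvU⟩)

theorem IsPosDangerousPair.inter_inter_eq_empty (hP1 : IsCrossingClosed F)
    (hP2 : SeparatesSigns σ F) (hU : IsPosDangerousPair σ F p U U') (hW : W ∈ F) (hpW : p ∉ W)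
    (hne : (W ∩ U).Nonempty) (hne' : (W ∩ U').Nonempty) (hWU : W ∪ U ≠ univ)
    (hWU' : W ∪ U' ≠ univ) : W ∩ (U ∩ U') = ∅ := by
  by_contra hcap
  obtain ⟨hY, -⟩ := hP1 W hW U hU.left_mem hne hWU
  obtain ⟨hY', -⟩ := hP1 W hW U' hU.right_mem hne' hWU'
  have hcap' : (W ∩ U ∩ (W ∩ U')).Nonempty := by
    rw [inter_inter_distrib_left W U U'] at hcap
    exact nonempty_iff_ne_empty.mpr hcap
  have hcup : W ∩ U ∪ W ∩ U' ≠ univ := by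
    rw [← inter_union_distrib_left]
    exact fun h => hP2.ne_univ hW (eq_univ_of_univ_subset (h ▸ inter_subset_left))
  obtain ⟨hZ, -⟩ := hP1 _ hY _ hY' hcap' hcup
  obtain ⟨⟨y, ⟨⟨hyW, hyU⟩, -, hyU'⟩, hy⟩, -⟩ := hP2 _ hZ
  exact hpW (hU.eq_of_mem_inter y ⟨hyU, hyU'⟩ hy ▸ hyW)

variable {W₁ W₂ U₁ U₂ : Set V}

theorem inter_nonempty_and_inter_subset_pair (hP1 : IsCrossingClosed F)
    (hP2 : SeparatesSigns σ F) (hP3 : DisjointPairsMissNegative σ F)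
    (hP4 : CoveringPairsSharePositive σ F) (hW : IsNegDangerousPair σ F m W₁ W₂)
    (hU : IsPosDangerousPair σ F p U₁ U₂) (hpW₁ : p ∉ W₁) (hpW₂ : p ∉ W₂) (hmU₁ : m ∈ U₁)
    (hmU₂ : m ∈ U₂) (h₁₂ : (W₁ ∩ U₂).Nonempty) :
    (W₁ ∩ U₁).Nonempty ∧ U₁ ∩ U₂ ⊆ {m, p} := by
  have c₁₁ := hU.union_ne_univ hP1 hP2 hP4 hW hpW₁ hpW₂
  have c₁₂ := hU.symm.union_ne_univ hP1 hP2 hP4 hW hpW₁ hpW₂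
  have c₂₁ := hU.union_ne_univ hP1 hP2 hP4 hW.symm hpW₂ hpW₁
  have c₂₂ := hU.symm.union_ne_univ hP1 hP2 hP4 hW.symm hpW₂ hpW₁
  have h₂₂ := hW.right_inter_nonempty_of_left hP1 hP3 hU.right_mem hmU₂ c₁₂ h₁₂
  have h₁₁ : (W₁ ∩ U₁).Nonempty :=
    (hW.inter_nonempty_or hP2 hU.right_mem hU.union_eq_univ hmU₂).elim id
      (hW.symm.right_inter_nonempty_of_left hP1 hP3 hU.left_mem hmU₁ c₂₁)
  have h₂₁ := hW.right_inter_nonempty_of_left hP1 hP3 hU.left_mem hmU₁ c₁₁ h₁₁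
  have e₁ := hU.inter_inter_eq_empty hP1 hP2 hW.left_mem hpW₁ h₁₁ h₁₂ c₁₁ c₁₂
  have e₂ := hU.inter_inter_eq_empty hP1 hP2 hW.right_mem hpW₂ h₂₁ h₂₂ c₂₁ c₂₂
  refine ⟨h₁₁, fun x hx => ?_⟩
  cases hσx : σ x
  · refine Or.inl (hW.eq_of_notMem_union x ?_ hσx)
    rintro (h | h)
    · exact (e₁ ▸ ⟨h, hx⟩ : x ∈ (∅ : Set V))
    · exact (e₂ ▸ ⟨h, hx⟩ : x ∈ (∅ : Set V))
  · exact Or.inr (hU.eq_of_mem_inter x hx hσx)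

end Families

section Circle

variable {n : ℕ}

def circularArc (a : ZMod n) (k : ℕ) : Set (ZMod n) :=
  {x | ∃ i : ℕ, i < k ∧ x = a + (i : ZMod n)}

variable {U : Set (ZMod n)} {b : ZMod n} {k l : ℕ}

theorem IsCircularInterval.exists_eq_circularArc_of_notMem_of_succ_mem
    (hU : IsCircularInterval U) (hb : b ∉ U) (hb' : b + 1 ∈ U) :
    ∃ k, U = circularArc (b + 1) k := by
  obtain ⟨a, k, rfl⟩ := hU
  obtain ⟨i, hi, hbi⟩ := hb'
  refine ⟨k, ?_⟩
  rcases i with _ | j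
  · simp_all [circularArc]
  · exact absurd ⟨j, by omega, by push_cast at hbi; linear_combination hbi⟩ hb

theorem IsCircularInterval.exists_eq_circularArc_of_mem_of_succ_notMem
    (hU : IsCircularInterval U) (hb : b ∈ U) (hb' : b + 1 ∉ U) :
    ∃ l : ℕ, U = circularArc (b + 1 - (l : ZMod n)) l := by
  obtain ⟨a, l, rfl⟩ := hU
  obtain ⟨j, hj, rfl⟩ := hb
  have hl : l = j + 1 := by
    by_contra hl
    exact hb' ⟨j + 1, by omega, by push_cast; ring⟩
  subst hl
  refine ⟨j + 1, ?_⟩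
  rw [show a + (j : ZMod n) + 1 - ((j + 1 : ℕ) : ZMod n) = a by push_cast; ring]
  rfl

theorem circularArc_subset_pair (hb : b + 2 ∉ circularArc b k) :
    circularArc b k ⊆ {b, b + 1} := by
  rintro x ⟨i, hi, rfl⟩
  have hk : k ≤ 2 := by
    by_contra hk
    exact hb ⟨2, by omega, by push_cast; ring⟩
  obtain rfl | rfl : i = 0 ∨ i = 1 := by omega
  all_goals simp

/-- Overlapping arcs `[b - l, b)` and `[b, b + k)` force `n < k + l`, so together they cover the
circle. -/
theorem circularArc_union_eq_univ
    (h : (circularArc (b - (l : ZMod n)) l ∩ circularArc b k).Nonempty) :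
    circularArc (b - (l : ZMod n)) l ∪ circularArc b k = univ := by
  obtain ⟨x, ⟨j, hj, rfl⟩, i, hi, hx⟩ := h
  obtain ⟨d, rfl⟩ : ∃ d, l = j + d + 1 := ⟨l - j - 1, by omega⟩
  have hdvd : n ∣ i + d + 1 := by
    rw [← ZMod.natCast_eq_zero_iff]
    push_cast at hx ⊢
    linear_combination -hx
  have : NeZero n := ⟨(Nat.pos_of_dvd_of_pos hdvd (by omega)).ne'⟩
  have hn : n ≤ i + d + 1 := Nat.le_of_dvd (by omega) hdvd
  refine eq_univ_of_forall fun y => ?_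
  have hy : y = b + ((y - b).val : ZMod n) := by rw [ZMod.natCast_zmod_val]; ring
  by_cases ht : (y - b).val < k
  · exact Or.inr ⟨_, ht, hy⟩
  · have ht' := ZMod.val_lt (y - b)
    obtain ⟨s, hs⟩ : ∃ s, (y - b).val + (j + d + 1) = n + s :=
      ⟨_, (Nat.add_sub_of_le (by omega)).symm⟩
    refine Or.inl ⟨s, by omega, ?_⟩
    have hs' := congrArg (Nat.cast : ℕ → ZMod n) hs
    push_cast [ZMod.natCast_self] at hs' ⊢
    linear_combination hy + hs'

-- Axiom (AP1).
def PosEndsHavePosNeighbors (σ : ZMod n → Bool) (F : Set (Set (ZMod n))) : Prop :=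
  ∀ U ∈ F, ∀ u ∈ U, σ u = true → ∀ u', u' ∉ U → (u' = u + 1 ∨ u = u' + 1) → σ u' = true

variable {σ : ZMod n → Bool} {F : Set (Set (ZMod n))}

theorem PosEndsHavePosNeighbors.mem_of_succ_mem (hAP1 : PosEndsHavePosNeighbors σ F)
    (hU : U ∈ F) {u : ZMod n} (hu : u + 1 ∈ U) (hpos : σ (u + 1) = true) (hneg : σ u = false) :
    u ∈ U := by
  by_contra h
  simpa [hneg] using hAP1 U hU _ hu hpos u h (Or.inr rfl)

variable {W₁ W₂ U₁ U₂ : Set (ZMod n)}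

theorem false_of_dangerous_pairs (hP0 : ∀ U ∈ F, IsCircularInterval U)
    (hP1 : IsCrossingClosed F) (hP2 : SeparatesSigns σ F) (hP3 : DisjointPairsMissNegative σ F)
    (hP4 : CoveringPairsSharePositive σ F) (hAP1 : PosEndsHavePosNeighbors σ F)
    {m2 m1 p1 p2 : ZMod n} (hm1 : m1 = m2 + 1) (hp1 : p1 = m1 + 1) (hp2 : p2 = p1 + 1)
    (hσm2 : σ m2 = false) (hσm1 : σ m1 = false) (hσp1 : σ p1 = true) (hσp2 : σ p2 = true)
    (hW : IsNegDangerousPair σ F m1 W₁ W₂) (hU : IsPosDangerousPair σ F p1 U₁ U₂)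
    (hm2W₁ : m2 ∈ W₁) (hp2U₁ : p2 ∈ U₁) : False := by
  have hm1p1 : m1 ≠ p1 := fun h => by simp [h, hσp1] at hσm1
  have hm2p1 : m2 ≠ p1 := fun h => by simp [h, hσp1] at hσm2
  have hm2m1 : m2 ≠ m1 := fun h => hm1p1 (by linear_combination hm1 + h - hp1)
  have hp2p1 : p2 ≠ p1 := fun h => hm1p1 (by linear_combination hp2 - hp1 - h)
  have hmU₁ : m1 ∈ U₁ := hAP1.mem_of_succ_mem hU.left_mem (hp1 ▸ hU.mem_inter.1) (hp1 ▸ hσp1) hσm1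
  have hmU₂ : m1 ∈ U₂ := hAP1.mem_of_succ_mem hU.right_mem (hp1 ▸ hU.mem_inter.2) (hp1 ▸ hσp1) hσm1
  have hpW₁ : p1 ∉ W₁ := fun h => hW.notMem_union
    (Or.inl (hAP1.mem_of_succ_mem hW.left_mem (hp1 ▸ h) (hp1 ▸ hσp1) hσm1))
  have hpW₂ : p1 ∉ W₂ := fun h => hW.notMem_union
    (Or.inr (hAP1.mem_of_succ_mem hW.right_mem (hp1 ▸ h) (hp1 ▸ hσp1) hσm1))
  have hm2U₂ : m2 ∈ U₂ := by
    by_contra hm2U₂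
    obtain ⟨k, hk⟩ :=
      (hP0 U₂ hU.right_mem).exists_eq_circularArc_of_notMem_of_succ_mem hm2U₂ (hm1 ▸ hmU₂)
    have hp2U₂ : p2 ∉ U₂ := fun hp2U₂ => hp2p1 (hU.eq_of_mem_inter p2 ⟨hp2U₁, hp2U₂⟩ hσp2)
    have hU₂ : U₂ ⊆ {m1, p1} := by
      rw [hk, ← hm1, hp1]
      refine circularArc_subset_pair fun hmem => hp2U₂ ?_
      rwa [hk, ← hm1, hp2, hp1, add_assoc, one_add_one_eq_two]
    refine hP2.ne_univ hU.left_mem (eq_univ_of_forall fun y => ?_)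
    refine (hU.union_eq_univ ▸ mem_univ y).elim id fun hy => ?_
    rcases hU₂ hy with rfl | rfl
    exacts [hmU₁, hU.mem_inter.1]
  obtain ⟨hWU₁, hUU⟩ := inter_nonempty_and_inter_subset_pair hP1 hP2 hP3 hP4 hW hU hpW₁ hpW₂
    hmU₁ hmU₂ ⟨m2, hm2W₁, hm2U₂⟩
  have hm2U₁ : m2 ∉ U₁ := fun h => (hUU ⟨h, hm2U₂⟩).elim hm2m1 hm2p1
  obtain ⟨k, hk⟩ :=
    (hP0 U₁ hU.left_mem).exists_eq_circularArc_of_notMem_of_succ_mem hm2U₁ (hm1 ▸ hmU₁)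
  obtain ⟨l, hl⟩ := (hP0 W₁ hW.left_mem).exists_eq_circularArc_of_mem_of_succ_notMem hm2W₁
    (hm1 ▸ fun h => hW.notMem_union (Or.inl h))
  apply hU.union_ne_univ hP1 hP2 hP4 hW hpW₁ hpW₂
  rw [hk, hl] at hWU₁ ⊢
  exact circularArc_union_eq_univ hWU₁

end Circle

theorem stmt_13_general {n : ℕ}
    (σ : ZMod n → Bool) (F : Set (Set (ZMod n)))
    (hP0 : ∀ U ∈ F, IsCircularInterval U)
    (hP1 : ∀ U ∈ F, ∀ W ∈ F, (U ∩ W).Nonempty → U ∪ W ≠ Set.univ →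
      U ∩ W ∈ F ∧ U ∪ W ∈ F)
    (hP2 : ∀ U ∈ F, (∃ u ∈ U, σ u = true) ∧ (∃ v ∉ U, σ v = false))
    (hP3 : ∀ U ∈ F, ∀ W ∈ F, U ∩ W = ∅ → ∃ v ∉ U ∪ W, σ v = false)
    (hP4 : ∀ U ∈ F, ∀ W ∈ F, U ∪ W = Set.univ → ∃ u ∈ U ∩ W, σ u = true)
    (hAP1 : ∀ U ∈ F, ∀ u ∈ U, σ u = true →
      ∀ u', u' ∉ U → (u' = u + 1 ∨ u = u' + 1) → σ u' = true)
    (m2 m1 p1 p2 : ZMod n)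
    (hm1 : m1 = m2 + 1) (hp1 : p1 = m2 + 2) (hp2 : p2 = m2 + 3)
    (hσm2 : σ m2 = false) (hσm1 : σ m1 = false)
    (hσp1 : σ p1 = true) (hσp2 : σ p2 = true) :
    ¬ ((∃ W1 ∈ F, ∃ W2 ∈ F, W1 ∩ W2 = ∅ ∧ m1 ∉ W1 ∪ W2 ∧
          ∀ x ∉ W1 ∪ W2, σ x = false → x = m1) ∧
       (∃ U1 ∈ F, ∃ U2 ∈ F, U1 ∪ U2 = Set.univ ∧ p1 ∈ U1 ∩ U2 ∧
          ∀ x ∈ U1 ∩ U2, σ x = true → x = p1)) := by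
  rintro ⟨⟨W1, hW1, W2, hW2, hWW, hm1W, hWneg⟩, ⟨U1, hU1, U2, hU2, hUU, hp1U, hUpos⟩⟩
  have hW : IsNegDangerousPair σ F m1 W1 W2 := ⟨hW1, hW2, hWW, hm1W, hWneg⟩
  have hU : IsPosDangerousPair σ F p1 U1 U2 := ⟨hU1, hU2, hUU, hp1U, hUpos⟩
  have hp1' : p1 = m1 + 1 := by rw [hp1, hm1]; ring
  have hp2' : p2 = p1 + 1 := by rw [hp2, hp1]; ring
  have hm2W : m2 ∈ W1 ∪ W2 := by
    by_contra h
    have hm2m1 := hWneg m2 h hσm2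
    have hm1p1 : m1 = p1 := by linear_combination hm2m1 + hm1 - hp1'
    simp [hm1p1, hσp1] at hσm1
  have hp2U : p2 ∈ U1 ∪ U2 := hUU ▸ Set.mem_univ p2
  have key {W₁ W₂ U₁ U₂} (hW : IsNegDangerousPair σ F m1 W₁ W₂)
      (hU : IsPosDangerousPair σ F p1 U₁ U₂) (hm2 : m2 ∈ W₁) (hp2 : p2 ∈ U₁) : False :=
    false_of_dangerous_pairs hP0 hP1 hP2 hP3 hP4 hAP1 hm1 hp1' hp2' hσm2 hσm1 hσp1 hσp2 hW hU
      hm2 hp2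
  rcases hm2W with hm2 | hm2 <;> rcases hp2U with hp2 | hp2
  exacts [key hW hU hm2 hp2, key hW hU.symm hm2 hp2, key hW.symm hU hm2 hp2,
    key hW.symm hU.symm hm2 hp2]

/-- Let `(V, σ, F)` satisfy P0–P4 and AP1 with four consecutive circle
vertices `m2, m1, p1, p2` signed `−, −, +, +`. Then there do not simultaneously exist an
`m1`-dangerous pair (`W1, W2 ∈ F` disjoint with `m1` the only negative vertex outside
`W1 ∪ W2`) and a `p1`-dangerous pair (`U1, U2 ∈ F` with `U1 ∪ U2 = V` and `p1` the only
positive vertex of `U1 ∩ U2`). (`true` = `+`, `false` = `−`; the circle is `ZMod n`.) -/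
theorem stmt_13 {n : ℕ} (hn : 4 ≤ n)
    (σ : ZMod n → Bool) (F : Set (Set (ZMod n)))
    (hF : ∀ U ∈ F, U ≠ ∅ ∧ U ≠ Set.univ)
    (hP0 : ∀ U ∈ F, IsCircularInterval U)
    (hP1 : ∀ U ∈ F, ∀ W ∈ F, (U ∩ W).Nonempty → U ∪ W ≠ Set.univ →
      U ∩ W ∈ F ∧ U ∪ W ∈ F)
    (hP2 : ∀ U ∈ F, (∃ u ∈ U, σ u = true) ∧ (∃ v ∉ U, σ v = false))
    (hP3 : ∀ U ∈ F, ∀ W ∈ F, U ∩ W = ∅ → ∃ v ∉ U ∪ W, σ v = false)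
    (hP4 : ∀ U ∈ F, ∀ W ∈ F, U ∪ W = Set.univ → ∃ u ∈ U ∩ W, σ u = true)
    (hAP1 : ∀ U ∈ F, ∀ u ∈ U, σ u = true →
      ∀ u', u' ∉ U → (u' = u + 1 ∨ u = u' + 1) → σ u' = true)
    (m2 m1 p1 p2 : ZMod n)
    (hm1 : m1 = m2 + 1) (hp1 : p1 = m2 + 2) (hp2 : p2 = m2 + 3)
    (hσm2 : σ m2 = false) (hσm1 : σ m1 = false)
    (hσp1 : σ p1 = true) (hσp2 : σ p2 = true) :
    ¬ ((∃ W1 ∈ F, ∃ W2 ∈ F, W1 ∩ W2 = ∅ ∧ m1 ∉ W1 ∪ W2 ∧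
          ∀ x ∉ W1 ∪ W2, σ x = false → x = m1) ∧
       (∃ U1 ∈ F, ∃ U2 ∈ F, U1 ∪ U2 = Set.univ ∧ p1 ∈ U1 ∩ U2 ∧
          ∀ x ∈ U1 ∩ U2, σ x = true → x = p1)) :=
  stmt_13_general σ F hP0 hP1 hP2 hP3 hP4 hAP1 m2 m1 p1 p2 hm1 hp1 hp2 hσm2 hσm1 hσp1 hσp2
end

section
/- Let F be a crossing family over V and σ a partial signing. Suppose an unsigned element v is forced positive by U ∈ F (v ∈ U, all of U\{v} signed negative, |U| ≥ 2) and forced negative by W ∈ F (v ∉ W, all of V\(W ∪ {v}) signed positive, |V\W| ≥ 2). Then U ∩ W ∈ F, U ∩ W ≠ ∅, and every element of U ∩ W is signed negative. -/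
/-!
An element of `U \ W` other than `v` would be signed both `−` (as a member of `U`) and `+`
(as a non-member of `W`), so `U \ W ⊆ {v}`. Hence a second element of `U` lies in
`U ∩ W`, and a second element of `Wᶜ` lies outside `U ∪ W`; so `U` and `W` cross, and
`U ∩ W ⊆ U \ {v}` is signed `−`.
-/

theorem diff_subset_singleton_of_forced_signs {V : Type*} {σ : V → Option Bool} {v : V}
    {U W : Set V} (hUneg : ∀ u ∈ U, u ≠ v → σ u = some false)
    (hWpos : ∀ x, x ∉ W → x ≠ v → σ x = some true) : U \ W ⊆ {v} := by
  rintro x ⟨hxU, hxW⟩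
  by_contra hxv
  simpa [hUneg x hxU hxv] using hWpos x hxW hxv

theorem stmt_16_general {V : Type*} (F : Set (Set V))
    (hcross : ∀ U ∈ F, ∀ W ∈ F, (U ∩ W).Nonempty → U ∪ W ≠ Set.univ →
      U ∩ W ∈ F ∧ U ∪ W ∈ F)
    (σ : V → Option Bool) (v : V)
    (U W : Set V) (hU : U ∈ F) (hW : W ∈ F)
    (hUcard : 2 ≤ U.ncard)
    (hUneg : ∀ u ∈ U, u ≠ v → σ u = some false)
    (hvW : v ∉ W) (hWcard : 2 ≤ (Wᶜ : Set V).ncard)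
    (hWpos : ∀ x, x ∉ W → x ≠ v → σ x = some true) :
    (U ∩ W).Nonempty ∧ U ∪ W ≠ Set.univ ∧ U ∩ W ∈ F ∧
      ∀ x ∈ U ∩ W, σ x = some false := by
  have hUW : U \ W ⊆ {v} := diff_subset_singleton_of_forced_signs hUneg hWpos
  obtain ⟨u, huU, huv⟩ := Set.exists_ne_of_one_lt_ncard hUcard v
  obtain ⟨w, hwW, hwv⟩ := Set.exists_ne_of_one_lt_ncard hWcard v
  have hinter : (U ∩ W).Nonempty :=
    ⟨u, huU, by_contra fun huW => huv (hUW ⟨huU, huW⟩)⟩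
  have hunion : U ∪ W ≠ Set.univ := by
    intro h
    rcases h.symm ▸ Set.mem_univ w with hwU | hwW'
    · exact hwv (hUW ⟨hwU, hwW⟩)
    · exact hwW hwW'
  refine ⟨hinter, hunion, (hcross U hU W hW hinter hunion).1, ?_⟩
  rintro x ⟨hxU, hxW⟩
  exact hUneg x hxU (ne_of_mem_of_not_mem hxW hvW)

/-- Let `F` be a crossing family over a finite set `V` and `σ` a partial
signing (`none` = unsigned, `some true` = `+`, `some false` = `−`). Suppose the unsigned
element `v` is forced positive by `U ∈ F` (`v ∈ U`, all of `U \ {v}` signed negative,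
`|U| ≥ 2`) and forced negative by `W ∈ F` (`v ∉ W`, all of `V \ (W ∪ {v})` signed positive,
`|V \ W| ≥ 2`). Then `U ∩ W ≠ ∅`, `U ∪ W ≠ V` (hence `U ∩ W ∈ F`), and every element of
`U ∩ W` is signed negative. -/
theorem stmt_16 {V : Type*} [Fintype V] (F : Set (Set V))
    (hF : ∀ U ∈ F, U ≠ ∅ ∧ U ≠ Set.univ)
    (hcross : ∀ U ∈ F, ∀ W ∈ F, (U ∩ W).Nonempty → U ∪ W ≠ Set.univ →
      U ∩ W ∈ F ∧ U ∪ W ∈ F)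
    (σ : V → Option Bool) (v : V) (hv : σ v = none)
    (U W : Set V) (hU : U ∈ F) (hW : W ∈ F)
    (hvU : v ∈ U) (hUcard : 2 ≤ U.ncard)
    (hUneg : ∀ u ∈ U, u ≠ v → σ u = some false)
    (hvW : v ∉ W) (hWcard : 2 ≤ (Wᶜ : Set V).ncard)
    (hWpos : ∀ x, x ∉ W → x ≠ v → σ x = some true) :
    (U ∩ W).Nonempty ∧ U ∪ W ≠ Set.univ ∧ U ∩ W ∈ F ∧
      ∀ x ∈ U ∩ W, σ x = some false :=
  stmt_16_general F hcross σ v U W hU hW hUcard hUneg hvW hWcard hWpos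
end

section
/- In a connected planar digraph whose weight-1 arcs form a spanning connected subgraph, contracting an undirected cycle C of weight-1 arcs and lifting two disjoint dijoins J1', J2' of the contraction by adding the clockwise arcs of C to J1' and the counterclockwise arcs to J2' yields two disjoint dijoins of the original digraph. -/
attribute [local instance] Classical.propDecidable

/-- `U` is the shore of a dicut of the digraph with arc set `A`: `U` is a nonempty proper
vertex subset with no arc entering it. -/
def IsDicutShore {V : Type*} [Fintype V] (A : Finset (V × V)) (U : Finset V) : Prop :=
  U.Nonempty ∧ U ≠ Finset.univ ∧ ∀ a ∈ A, ¬ (a.1 ∉ U ∧ a.2 ∈ U)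

/-- A dijoin: an arc subset meeting every dicut. -/
def IsDijoin {V : Type*} [Fintype V] (A : Finset (V × V)) (J : Finset (V × V)) : Prop :=
  J ⊆ A ∧ ∀ U : Finset V, IsDicutShore A U → ∃ a ∈ J, a.1 ∈ U ∧ a.2 ∉ U

/-- Crossing lemma: if `P i` holds and `P j` fails with `i ≤ j`, some step crosses. -/
lemma cross_lemma (P : ℕ → Prop) {i j : ℕ} (hij : i ≤ j) (hi : P i) (hj : ¬ P j) :
    ∃ m, P m ∧ ¬ P (m + 1) := by
  by_contra h
  push_neg at h
  have : ∀ n, i ≤ n → P n := by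
    intro n hn
    induction n, hn using Nat.le_induction with
    | base => exact hi
    | succ n hn ih => exact h n ih
  exact hj (this j hij)
/-- In a connected (plane) digraph whose weight-`1` arcs form a spanning
connected subgraph and whose dicuts all have weight at least `2`, contracting an undirected
cycle `C` of weight-`1` arcs (given by a `k`-periodic injective-on-a-period map
`c : ℕ → V`, `k ≥ 3`) and lifting two disjoint dijoins `J1', J2'` of the contraction — whose
dicut shores are exactly the dicut shores of `D` not separating the cycle — by adding the
clockwise arcs `C1` of `C` to `J1'` and the counterclockwise arcs `C2` to `J2'`, yields two
disjoint dijoins of the original digraph. -/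
theorem stmt_19 {V : Type*} [Fintype V] [DecidableEq V]
    (A : Finset (V × V)) (w : V × V → ℕ) (hw : ∀ a, w a ≤ 1)
    -- the weight-1 arcs form a spanning connected (undirected) subgraph
    (hconn : (SimpleGraph.fromRel (fun x y => (x, y) ∈ A ∧ w (x, y) = 1)).Connected)
    -- every dicut has weight at least 2
    (hD : ∀ U : Finset V, IsDicutShore A U →
      2 ≤ ∑ a ∈ A.filter (fun a => a.1 ∈ U ∧ a.2 ∉ U), w a)
    -- an undirected cycle of weight-1 arcs, traversed clockwise by c
    (k : ℕ) (hk : 3 ≤ k) (c : ℕ → V)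
    (hper : ∀ i, c (i + k) = c i)
    (hinj : ∀ i < k, ∀ j < k, c i = c j → i = j)
    (hcyc : ∀ i, ((c i, c (i + 1)) ∈ A ∧ w (c i, c (i + 1)) = 1) ∨
                 ((c (i + 1), c i) ∈ A ∧ w (c (i + 1), c i) = 1))
    -- C1: cycle arcs oriented clockwise; C2: the remaining cycle arcs
    (C1 C2 : Finset (V × V))
    (hC1 : C1 = A.filter (fun a => w a = 1 ∧ ∃ i, a = (c i, c (i + 1))))
    (hC2 : C2 = A.filter (fun a => w a = 1 ∧ (∃ i, a = (c (i + 1), c i)) ∧ a ∉ C1))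
    -- J1', J2': disjoint dijoins of the contraction, among its weight-1 arcs
    (J1' J2' : Finset (V × V))
    (hJ1A : J1' ⊆ A.filter (fun a => w a = 1))
    (hJ2A : J2' ⊆ A.filter (fun a => w a = 1))
    (hJ1C : ∀ a ∈ J1', a ∉ C1 ∪ C2) (hJ2C : ∀ a ∈ J2', a ∉ C1 ∪ C2)
    (hdisj : ∀ a ∈ J1', a ∉ J2')
    (hJ1 : ∀ U : Finset V, IsDicutShore A U →
      ((∀ i, c i ∈ U) ∨ (∀ i, c i ∉ U)) → ∃ a ∈ J1', a.1 ∈ U ∧ a.2 ∉ U)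
    (hJ2 : ∀ U : Finset V, IsDicutShore A U →
      ((∀ i, c i ∈ U) ∨ (∀ i, c i ∉ U)) → ∃ a ∈ J2', a.1 ∈ U ∧ a.2 ∉ U) :
    (∀ a ∈ J1' ∪ C1, a ∉ J2' ∪ C2) ∧
      IsDijoin A (J1' ∪ C1) ∧ IsDijoin A (J2' ∪ C2) := by
    classical
  -- basic facts about c and periodicity
  have hk0 : 0 < k := by omega
  have hpern : ∀ n i, c (i + n * k) = c i := by
    intro n
    induction n with
    | zero => intro i; simp
    | succ n ih =>
      intro i
      have : i + (n + 1) * k = (i + n * k) + k := by ring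
      rw [this, hper, ih]
  have hmodinj : ∀ i j, c i = c j → i % k = j % k := by
    intro i j hij
    have h1 : c (i % k) = c i := by
      conv_rhs => rw [← Nat.mod_add_div i k]
      rw [mul_comm]
      exact (hpern (i / k) (i % k)).symm
    have h2 : c (j % k) = c j := by
      conv_rhs => rw [← Nat.mod_add_div j k]
      rw [mul_comm]
      exact (hpern (j / k) (j % k)).symm
    exact hinj _ (Nat.mod_lt _ hk0) _ (Nat.mod_lt _ hk0) (by rw [h1, h2, hij])
  -- C1 and C2 are disjoint, and contained in A
  have hC1A : C1 ⊆ A := by rw [hC1]; exact Finset.filter_subset _ _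
  have hC2A : C2 ⊆ A := by rw [hC2]; exact Finset.filter_subset _ _
  have hC12 : ∀ a ∈ C1, a ∉ C2 := by
    intro a ha hb
    rw [hC2, Finset.mem_filter] at hb
    exact hb.2.2.2 ha
  refine ⟨?_, ⟨?_, ?_⟩, ⟨?_, ?_⟩⟩
  · -- disjointness
    intro a ha hb
    rcases Finset.mem_union.1 ha with h1 | h1 <;> rcases Finset.mem_union.1 hb with h2 | h2
    · exact hdisj a h1 h2
    · exact hJ1C a h1 (Finset.mem_union.2 (Or.inr h2))
    · exact hJ2C a h2 (Finset.mem_union.2 (Or.inl h1))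
    · exact hC12 a h1 h2
  · -- J1' ∪ C1 ⊆ A
    intro a ha
    rcases Finset.mem_union.1 ha with h | h
    · exact (Finset.mem_filter.1 (hJ1A h)).1
    · exact hC1A h
  · -- J1' ∪ C1 is a dijoin
    intro U hU
    by_cases hsep : (∀ i, c i ∈ U) ∨ (∀ i, c i ∉ U)
    · obtain ⟨a, ha, h⟩ := hJ1 U hU hsep
      exact ⟨a, Finset.mem_union.2 (Or.inl ha), h⟩
    · push_neg at hsep
      obtain ⟨⟨j0, hj0⟩, i0, hi0⟩ := hsep
      -- find m with c m ∈ U, c (m+1) ∉ U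
      have hle : i0 ≤ j0 + (i0 + 1) * k := by nlinarith
      have hj0' : c (j0 + (i0 + 1) * k) ∉ U := by rw [hpern]; exact hj0
      obtain ⟨m, hm1, hm2⟩ := cross_lemma (fun n => c n ∈ U) hle hi0 hj0'
      rcases hcyc m with ⟨hmem, hwm⟩ | ⟨hmem, hwm⟩
      · refine ⟨(c m, c (m + 1)), Finset.mem_union.2 (Or.inr ?_), hm1, hm2⟩
        rw [hC1, Finset.mem_filter]
        exact ⟨hmem, hwm, m, rfl⟩
      · exact absurd ⟨hm2, hm1⟩ (hU.2.2 _ hmem)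
  · -- J2' ∪ C2 ⊆ A
    intro a ha
    rcases Finset.mem_union.1 ha with h | h
    · exact (Finset.mem_filter.1 (hJ2A h)).1
    · exact hC2A h
  · -- J2' ∪ C2 is a dijoin
    intro U hU
    by_cases hsep : (∀ i, c i ∈ U) ∨ (∀ i, c i ∉ U)
    · obtain ⟨a, ha, h⟩ := hJ2 U hU hsep
      exact ⟨a, Finset.mem_union.2 (Or.inl ha), h⟩
    · push_neg at hsep
      obtain ⟨⟨j0, hj0⟩, i0, hi0⟩ := hsep
      -- find m with c m ∉ U, c (m+1) ∈ U
      have hle : j0 ≤ i0 + (j0 + 1) * k := by nlinarith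
      have hi0' : c (i0 + (j0 + 1) * k) ∈ U := by rw [hpern]; exact hi0
      obtain ⟨m, hm1, hm2⟩ := cross_lemma (fun n => c n ∉ U) hle hj0 (by simpa using hi0')
      have hm2' : c (m + 1) ∈ U := not_not.1 hm2
      rcases hcyc m with ⟨hmem, hwm⟩ | ⟨hmem, hwm⟩
      · exact absurd ⟨hm1, hm2'⟩ (hU.2.2 _ hmem)
      · refine ⟨(c (m + 1), c m), Finset.mem_union.2 (Or.inr ?_), hm2', hm1⟩
        rw [hC2, Finset.mem_filter]
        refine ⟨hmem, hwm, ⟨m, rfl⟩, ?_⟩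
        rw [hC1, Finset.mem_filter]
        rintro ⟨-, -, n, hn⟩
        have h1 : c (m + 1) = c n := congrArg Prod.fst hn
        have h2 : c m = c (n + 1) := congrArg Prod.snd hn
        have e1 := hmodinj _ _ h1
        have e2 := hmodinj _ _ h2
        -- (m+1) % k = n % k and m % k = (n+1) % k ⟹ k ∣ 2, contradiction
        have e3 : (m + 2) % k = (n + 1) % k := by
          have := Nat.ModEq.add_right 1 (e1 : (m + 1) % k = n % k)
          exact (by simpa [Nat.add_assoc] using this : m + 2 ≡ n + 1 [MOD k])
        have e4 : (m + 2) % k = m % k := by rw [e3, ← e2]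
        have : k ∣ (m + 2) - m := (Nat.modEq_iff_dvd' (by omega)).1 e4.symm
        simp at this
        have := Nat.le_of_dvd (by norm_num) this
        omega
end
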